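/- arXiv:math/0512626 — 7 statements merged into one kernel-verified Lean document; each statement's English description precedes it below -/
import Mathlib

section
/- Let E be a countable Borel equivalence relation on a standard Borel space X. If the quotient σ-algebra Bor(X/E) (consisting of sets A ⊆ X/E whose preimage under the quotient map is Borel) is countably generated, then E is smooth, i.e., there is a Borel reduction of E to the equality relation on some standard Borel space. -/
open MeasureTheory Set

/-- A subset of the quotient is Borel iff its preimage under the projection is Borel. -/
def QBorelSet {X : Type} [MeasurableSpace X] (E : Setoid X) (A : Set (Quotient E)) : Prop :=
  MeasurableSet (Quotient.mk E ⁻¹' A)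

/-- A relation between quotient Borel spaces is Borel iff its pullback to the
product of the standard Borel spaces is Borel. -/
def QBorelRel {X Y : Type} [MeasurableSpace X] [MeasurableSpace Y]
    (E : Setoid X) (F : Setoid Y) (R : Set (Quotient E × Quotient F)) : Prop :=
  MeasurableSet {p : X × Y | (Quotient.mk E p.1, Quotient.mk F p.2) ∈ R}

/-- A function between quotient Borel spaces is Borel iff its graph is a Borel relation. -/
def QBorelFun {X Y : Type} [MeasurableSpace X] [MeasurableSpace Y]
    (E : Setoid X) (F : Setoid Y) (f : Quotient E → Quotient F) : Prop :=
  MeasurableSet {p : X × Y | f (Quotient.mk E p.1) = Quotient.mk F p.2}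

/-- `E` is a countable Borel equivalence relation. -/
def CBER {X : Type} [MeasurableSpace X] (E : Setoid X) : Prop :=
  MeasurableSet {p : X × X | E.r p.1 p.2} ∧ ∀ x : X, {y | E.r x y}.Countable

/-- `E` is smooth: Borel reducible to equality on some standard Borel space. -/
def SmoothRel {X : Type} [MeasurableSpace X] (E : Setoid X) : Prop :=
  ∃ (Y : Type) (_ : MeasurableSpace Y) (_ : StandardBorelSpace Y) (f : X → Y),
    Measurable f ∧ ∀ x y : X, E.r x y ↔ f x = f y

/-- if the quotient σ-algebra of a countable Borel equivalence relation on a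
standard Borel space is countably generated, then the relation is smooth. -/
theorem stmt_0 {X : Type} [MeasurableSpace X] [StandardBorelSpace X]
    (E : Setoid X) (hE : CBER E)
    (hCG : MeasurableSpace.CountablyGenerated (Quotient E)) :
    SmoothRel E := by
  haveI := hCG
  haveI hsep : MeasurableSpace.SeparatesPoints (Quotient E) := by
    constructor
    intro x y h
    induction x using Quotient.inductionOn with
    | h a =>
    induction y using Quotient.inductionOn with
    | h b =>
    have hm : MeasurableSet ({⟦a⟧} : Set (Quotient E)) := by
      show MeasurableSet (Quotient.mk'' ⁻¹' ({⟦a⟧} : Set (Quotient E)))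
      have heq : Quotient.mk'' ⁻¹' ({⟦a⟧} : Set (Quotient E)) = {y | E.r a y} := by
        ext y
        simp only [Set.mem_preimage, Set.mem_singleton_iff, Set.mem_setOf_eq,
          Quotient.mk''_eq_mk, Quotient.eq]
        exact ⟨fun h => Setoid.symm h, fun h => Setoid.symm h⟩
      rw [heq]
      exact (hE.2 a).measurableSet
    exact (h _ hm rfl).symm
  haveI : MeasurableSpace.CountablySeparated (Quotient E) := inferInstance
  obtain ⟨f, fmeas, finj⟩ :=
    MeasurableSpace.measurable_injection_nat_bool_of_countablySeparated (Quotient E)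
  refine ⟨ℕ → Bool, inferInstance, inferInstance, f ∘ Quotient.mk E, ?_, ?_⟩
  · exact fmeas.comp measurable_quotient_mk''
  · intro x y
    constructor
    · intro h
      simp only [Function.comp_apply]
      exact congrArg f (Quotient.sound h)
    · intro h
      exact Quotient.eq.mp (finj h)
end

section
/- Let f : (X,E) → (Y,F) be a Borel function between quotient Borel spaces (i.e., its graph is Borel in the product quotient space). Then the preimage f⁻¹[B] of every Borel subset B ⊆ (Y,F) is a Borel subset of (X,E). -/
open MeasureTheory Set

/-- the preimage of a Borel set under a Borel function between quotient Borel
spaces is Borel. -/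
theorem stmt_5 {X Y : Type} [MeasurableSpace X] [StandardBorelSpace X]
    [MeasurableSpace Y] [StandardBorelSpace Y]
    (E : Setoid X) (hE : CBER E) (F : Setoid Y) (hF : CBER F)
    (f : Quotient E → Quotient F) (hfB : QBorelFun E F f)
    (B : Set (Quotient F)) (hB : QBorelSet F B) :
    QBorelSet E (f ⁻¹' B) := by
  letI := upgradeStandardBorel X
  -- the set in question and its complement are both projections of Borel sets
  set G : Set (X × Y) := {p : X × Y | f (Quotient.mk E p.1) = Quotient.mk F p.2} with hG
  have hGmeas : MeasurableSet G := hfB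
  have hB' : MeasurableSet (Quotient.mk F ⁻¹' B) := hB
  have h1 : Quotient.mk E ⁻¹' (f ⁻¹' B)
      = Prod.fst '' (G ∩ {p : X × Y | p.2 ∈ Quotient.mk F ⁻¹' B}) := by
    ext x
    constructor
    · intro hx
      obtain ⟨y, hy⟩ := Quotient.exists_rep (f (Quotient.mk E x))
      exact ⟨(x, y), ⟨hy.symm, by simpa [hy] using hx⟩, rfl⟩
    · rintro ⟨⟨x', y⟩, ⟨hGp, hyB⟩, rfl⟩
      simp only [mem_preimage, mem_setOf_eq] at *
      rwa [hGp]
  have h2 : (Quotient.mk E ⁻¹' (f ⁻¹' B))ᶜ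
      = Prod.fst '' (G ∩ {p : X × Y | p.2 ∈ (Quotient.mk F ⁻¹' B)ᶜ}) := by
    ext x
    constructor
    · intro hx
      obtain ⟨y, hy⟩ := Quotient.exists_rep (f (Quotient.mk E x))
      exact ⟨(x, y), ⟨hy.symm, by simpa [hy] using hx⟩, rfl⟩
    · rintro ⟨⟨x', y⟩, ⟨hGp, hyB⟩, rfl⟩
      simp only [mem_compl_iff, mem_preimage, mem_setOf_eq] at *
      rwa [hGp]
  have hA1 : AnalyticSet (Prod.fst '' (G ∩ {p : X × Y | p.2 ∈ Quotient.mk F ⁻¹' B})) :=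
    (hGmeas.inter (measurable_snd hB')).analyticSet_image measurable_fst
  have hA2 : AnalyticSet (Prod.fst '' (G ∩ {p : X × Y | p.2 ∈ (Quotient.mk F ⁻¹' B)ᶜ})) :=
    (hGmeas.inter (measurable_snd hB'.compl)).analyticSet_image measurable_fst
  have : MeasurableSet (Quotient.mk E ⁻¹' (f ⁻¹' B)) := by
    apply AnalyticSet.measurableSet_of_compl
    · rw [h1]; exact hA1
    · rw [h2]; exact hA2
  exact this
end

section
/- Let X, Y be standard Borel spaces, E, F countable Borel equivalence relations on X, Y, with F nonsmooth and X uncountable. Then there is a Borel subset of the quotient space (X×Y, E×F) that does not belong to the product σ-algebra Bor(X/E) ⊗ Bor(Y/F). -/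
open MeasureTheory Set

/-!
Since `X` is uncountable, transport `E` to the Cantor space: it is a Borel set with countable
sections, hence meagre (Kuratowski–Ulam), so Mycielski's theorem gives a Borel map `j : Y → X`
with `y ↦ [j y]` injective. The set `S = {([j y], [y])}` is Borel in the quotient of `X × Y`,
since its pullback is an injective Borel image (Lusin–Souslin). If `S` were in
`Bor(X/E) ⊗ Bor(Y/F)`, it would lie in the σ-algebra generated by countably many rectangles
`A n × B n`; as the section of `S` at `[j y]` is `{[y]}`, the sets `B n` would separate the
`F`-classes, and `F` would be smooth.
-/

open Filter Topology

section Baire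

variable {X Y : Type*} [TopologicalSpace X] [TopologicalSpace Y]

theorem Set.Countable.isMeagre [T1Space X] [∀ x : X, NeBot (𝓝[≠] x)] {s : Set X}
    (hs : s.Countable) : IsMeagre s := by
  rw [← biUnion_of_singleton s]
  exact isMeagre_biUnion hs fun x _ =>
    residual_of_dense_open isOpen_compl_singleton (dense_compl_singleton x)

theorem exists_antitone_isOpen_dense_of_mem_residual {s : Set X} (hs : s ∈ residual X) :
    ∃ D : ℕ → Set X, Antitone D ∧ (∀ n, IsOpen (D n) ∧ Dense (D n)) ∧ ⋂ n, D n ⊆ s := by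
  obtain ⟨S, hSo, hSd, hSc, hSs⟩ := mem_residual_iff.1 hs
  obtain ⟨f, hf⟩ := (hSc.insert univ).exists_eq_range (insert_nonempty _ _)
  have hfod : ∀ k, IsOpen (f k) ∧ Dense (f k) := fun k => by
    rcases (hf ▸ mem_range_self k : f k ∈ insert univ S) with h | h
    · exact h ▸ ⟨isOpen_univ, dense_univ⟩
    · exact ⟨hSo _ h, hSd _ h⟩
  have hfin : ∀ n, (f '' Iic n).Finite := fun n => (finite_Iic n).image f
  have hopen : ∀ n, ∀ t ∈ f '' Iic n, IsOpen t := fun n => forall_mem_image.2 fun k _ => (hfod k).1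
  have hdense : ∀ n, ∀ t ∈ f '' Iic n, Dense t := fun n => forall_mem_image.2 fun k _ => (hfod k).2
  refine ⟨fun n => ⋂₀ (f '' Iic n), fun m n hmn => sInter_subset_sInter
    (image_mono (Iic_subset_Iic.2 hmn)), fun n => ⟨(hfin n).isOpen_sInter (hopen n),
    (hfin n).dense_sInter (hopen n) (hdense n)⟩, fun x hx => hSs fun t ht => ?_⟩
  obtain ⟨k, rfl⟩ : t ∈ range f := hf ▸ mem_insert_of_mem _ ht
  exact mem_iInter.1 hx k _ (mem_image_of_mem f self_mem_Iic)

theorem IsMeagre.eventually_isMeagre_sections [SecondCountableTopology Y] {M : Set (X × Y)}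
    (hM : IsMeagre M) : ∀ᶠ x in residual X, IsMeagre (Prod.mk x ⁻¹' M) := by
  obtain ⟨S, hSo, hSd, hSc, hSM⟩ := mem_residual_iff.1 hM
  obtain ⟨B, hBc, -, hB⟩ := TopologicalSpace.exists_countable_basis Y
  have hproj : ∀ D ∈ S, ∀ V ∈ B, {x | V.Nonempty → ∃ y ∈ V, (x, y) ∈ D} ∈ residual X := by
    intro D hD V hV
    rcases V.eq_empty_or_nonempty with rfl | hVne
    · simp
    have hopen : IsOpen {x | ∃ y ∈ V, (x, y) ∈ D} := by
      rw [show {x | ∃ y ∈ V, (x, y) ∈ D} = ⋃ y ∈ V, (·, y) ⁻¹' D by ext; simp]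
      exact isOpen_biUnion fun y _ => (hSo D hD).preimage (.prodMk_left y)
    refine mem_of_superset (residual_of_dense_open hopen ?_) fun x hx _ => hx
    refine dense_iff_inter_open.2 fun U hU hUne => ?_
    obtain ⟨p, hpUV, hpD⟩ := (hSd D hD).inter_open_nonempty _ (hU.prod (hB.isOpen hV))
      (hUne.prod hVne)
    exact ⟨p.1, hpUV.1, p.2, hpUV.2, hpD⟩
  filter_upwards [(countable_bInter_mem hSc).2 fun D hD =>
    (countable_bInter_mem hBc).2 (hproj D hD)] with x hx
  refine mem_of_superset ((countable_bInter_mem hSc).2 fun D hD => residual_of_dense_open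
    ((hSo D hD).preimage (.prodMk_right x)) (hB.dense_iff.2 fun V hV hVne => ?_))
    fun y hy hyM => hSM (by simpa using hy) hyM
  obtain ⟨y, hyV, hyD⟩ := mem_iInter₂.1 (mem_iInter₂.1 hx D hD) V hV hVne
  exact ⟨y, hyV, hyD⟩

theorem BaireMeasurableSet.isMeagre_of_countable_sections [BaireSpace X] [BaireSpace Y]
    [SecondCountableTopology Y] [T1Space Y] [∀ y : Y, NeBot (𝓝[≠] y)] {S : Set (X × Y)}
    (hS : BaireMeasurableSet S) (hsec : ∀ x, (Prod.mk x ⁻¹' S).Countable) : IsMeagre S := by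
  obtain ⟨U, hUo, hSU⟩ := hS.residualEq_isOpen
  set M := {p | p ∈ S ↔ p ∈ U}ᶜ
  have hM : IsMeagre M := by
    rw [IsMeagre, compl_compl]
    exact eventuallyEq_set.1 hSU
  suffices hU : U = ∅ from IsMeagre.mono (fun p hpS => by simp [M, hU, hpS]) hM
  by_contra! ⟨⟨x₀, y₀⟩, hp⟩
  obtain ⟨V, W, hV, hW, hx₀, hy₀, hVW⟩ := isOpen_prod_iff.1 hUo x₀ y₀ hp
  obtain ⟨x, hxV, hxM⟩ :=
    (dense_of_mem_residual hM.eventually_isMeagre_sections).inter_open_nonempty V hV ⟨x₀, hx₀⟩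
  have hWsub : W ⊆ Prod.mk x ⁻¹' S ∪ Prod.mk x ⁻¹' M := fun y hy => by
    have hxy : (x, y) ∈ U := hVW ⟨hxV, hy⟩
    by_cases h : (x, y) ∈ M
    · exact Or.inr h
    · exact Or.inl ((not_not.1 h).2 hxy)
  exact not_isMeagre_of_isOpen hW ⟨y₀, hy₀⟩ (((hsec x).isMeagre.union hxM).mono hWsub)

end Baire

namespace Cantor

def initSeg (x : ℕ → Bool) (n : ℕ) : List Bool := List.ofFn fun i : Fin n => x i

def cyl (s : List Bool) : Set (ℕ → Bool) := {x | initSeg x s.length = s}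

@[simp] theorem length_initSeg (x : ℕ → Bool) (n : ℕ) : (initSeg x n).length = n :=
  List.length_ofFn

theorem initSeg_succ (x : ℕ → Bool) (n : ℕ) : initSeg x (n + 1) = initSeg x n ++ [x n] :=
  List.ofFn_succ_last

theorem initSeg_eq_initSeg_iff {x y : ℕ → Bool} {n : ℕ} :
    initSeg x n = initSeg y n ↔ ∀ i < n, x i = y i := by
  simp [initSeg, List.ofFn_inj, funext_iff, Fin.forall_iff]

theorem initSeg_prefix (x : ℕ → Bool) {m n : ℕ} (h : m ≤ n) : initSeg x m <+: initSeg x n := by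
  rw [List.prefix_iff_eq_take]
  exact List.ext_getElem (by simp [h]) fun i _ _ => by simp [initSeg]

theorem mem_cyl_iff {x : ℕ → Bool} {s : List Bool} :
    x ∈ cyl s ↔ ∀ (i : ℕ) (h : i < s.length), x i = s[i] := by
  simp [cyl, List.ext_getElem_iff, initSeg]

theorem prefix_initSeg_of_mem_cyl {x : ℕ → Bool} {s : List Bool} (hx : x ∈ cyl s) {n : ℕ}
    (hn : s.length ≤ n) : s <+: initSeg x n :=
  hx ▸ initSeg_prefix x hn

theorem cyl_anti {s t : List Bool} (h : s <+: t) : cyl t ⊆ cyl s := fun x hx =>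
  ((List.prefix_of_prefix_length_le (hx ▸ initSeg_prefix x h.length_le) h
    (by simp)).eq_of_length (by simp))

theorem cyl_nonempty (s : List Bool) : (cyl s).Nonempty :=
  ⟨fun i => s.getD i false, mem_cyl_iff.2 fun i h => by simp [h]⟩

theorem continuous_comp_initSeg {β : Type*} [TopologicalSpace β] (g : List Bool → β) (n : ℕ) :
    Continuous fun x => g (initSeg x n) :=
  continuous_of_discreteTopology (f := fun y : Fin n → Bool => g (List.ofFn y)).comp
    (continuous_pi fun i => continuous_apply (i : ℕ))

theorem isOpen_cyl (s : List Bool) : IsOpen (cyl s) :=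
  isOpen_iff_continuous_mem.2 (continuous_comp_initSeg (· = s) s.length)

theorem cyl_initSeg_eq_cylinder (x : ℕ → Bool) (n : ℕ) :
    cyl (initSeg x n) = PiNat.cylinder x n := by
  ext y
  simp [cyl, initSeg_eq_initSeg_iff, PiNat.mem_cylinder_iff]

theorem exists_cyl_initSeg_subset {x : ℕ → Bool} {U : Set (ℕ → Bool)} (hU : U ∈ 𝓝 x) :
    ∃ n, cyl (initSeg x n) ⊆ U := by
  obtain ⟨_, ⟨y, n, rfl⟩, hxy, hU⟩ := (PiNat.isTopologicalBasis_cylinders _).mem_nhds_iff.1 hU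
  exact ⟨n, by rwa [cyl_initSeg_eq_cylinder, PiNat.mem_cylinder_iff_eq.1 hxy]⟩

theorem exists_cyl_prod_subset {x y : ℕ → Bool} {U : Set ((ℕ → Bool) × (ℕ → Bool))}
    (hU : U ∈ 𝓝 (x, y)) : ∃ n, cyl (initSeg x n) ×ˢ cyl (initSeg y n) ⊆ U := by
  obtain ⟨u, hu, v, hv, huv⟩ := mem_nhds_prod_iff.1 hU
  obtain ⟨m, hm⟩ := exists_cyl_initSeg_subset hu
  obtain ⟨n, hn⟩ := exists_cyl_initSeg_subset hv
  refine ⟨max m n, Subset.trans (prod_mono ?_ ?_) huv⟩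
  · exact (cyl_anti (initSeg_prefix x (le_max_left m n))).trans hm
  · exact (cyl_anti (initSeg_prefix y (le_max_right m n))).trans hn

instance : PerfectSpace (ℕ → Bool) := by
  refine perfectSpace_iff_forall_not_isolated.2 fun x =>
    mem_closure_iff_nhdsWithin_neBot.1 ((dense_compl_singleton_iff_not_open.2 fun hx => ?_) x)
  obtain ⟨n, hn⟩ := exists_cyl_initSeg_subset (hx.mem_nhds rfl)
  have hupd : Function.update x n (!x n) ∈ cyl (initSeg x n) := by
    rw [cyl_initSeg_eq_cylinder]
    exact PiNat.update_mem_cylinder x n _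
  simpa using congrFun (hn hupd) n

section OpenDense

variable {D : Set ((ℕ → Bool) × (ℕ → Bool))}

theorem exists_prefix_prod_cyl_subset (hDo : IsOpen D) (hDd : Dense D) (s t : List Bool) :
    ∃ s' t', s <+: s' ∧ t <+: t' ∧ cyl s' ×ˢ cyl t' ⊆ D := by
  obtain ⟨p, hp, hpD⟩ := hDd.inter_open_nonempty _ ((isOpen_cyl s).prod (isOpen_cyl t))
    ((cyl_nonempty s).prod (cyl_nonempty t))
  obtain ⟨n, hn⟩ := exists_cyl_prod_subset (hDo.mem_nhds hpD)
  set N := max n (max s.length t.length)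
  refine ⟨initSeg p.1 N, initSeg p.2 N, prefix_initSeg_of_mem_cyl hp.1 (by omega),
    prefix_initSeg_of_mem_cyl hp.2 (by omega), Subset.trans (prod_mono ?_ ?_) hn⟩ <;>
  exact cyl_anti (initSeg_prefix _ (le_max_left _ _))

theorem exists_prefix_forall_prod_cyl_subset (hDo : IsOpen D) (hDd : Dense D)
    {P : Set (List Bool × List Bool)} (hP : P.Finite) (f₀ : List Bool → List Bool) :
    ∃ f : List Bool → List Bool, (∀ s, f₀ s <+: f s) ∧
      ∀ p ∈ P, p.1 ≠ p.2 → cyl (f p.1) ×ˢ cyl (f p.2) ⊆ D := by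
  induction P, hP using Set.Finite.induction_on with
  | empty => exact ⟨f₀, fun s => List.prefix_refl _, by simp⟩
  | @insert p P _ _ ih =>
    obtain ⟨f, hf₀, hfP⟩ := ih
    by_cases hp : p.1 = p.2
    · refine ⟨f, hf₀, ?_⟩
      rintro q (rfl | hq) hne
      exacts [absurd hp hne, hfP q hq hne]
    obtain ⟨s', t', hs', ht', hsub⟩ := exists_prefix_prod_cyl_subset hDo hDd (f p.1) (f p.2)
    classical
    set g := Function.update (Function.update f p.1 s') p.2 t'
    have hg₁ : g p.1 = s' := by simp [g, hp]
    have hg₂ : g p.2 = t' := by simp [g]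
    have hfg : ∀ s, f s <+: g s := fun s => by
      by_cases h₂ : s = p.2
      · rwa [h₂, hg₂]
      by_cases h₁ : s = p.1
      · rwa [h₁, hg₁]
      simp [g, h₁, h₂]
    refine ⟨g, fun s => (hf₀ s).trans (hfg s), ?_⟩
    rintro q (rfl | hq) hne
    · rwa [hg₁, hg₂]
    · exact Subset.trans (prod_mono (cyl_anti (hfg _)) (cyl_anti (hfg _))) (hfP q hq hne)

end OpenDense

variable {D : ℕ → Set ((ℕ → Bool) × (ℕ → Bool))}

noncomputable def mycielskiScheme (hD : ∀ n, IsOpen (D n) ∧ Dense (D n)) :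
    ℕ → List Bool → List Bool
  | 0 => fun _ => []
  | n + 1 => Classical.choose <|
      exists_prefix_forall_prod_cyl_subset (hD (n + 1)).1 (hD (n + 1)).2
        ((List.finite_length_eq Bool (n + 1)).prod (List.finite_length_eq Bool (n + 1)))
        fun s => mycielskiScheme hD n s.dropLast ++ [s.getLastD false]

variable (hD : ∀ n, IsOpen (D n) ∧ Dense (D n))

theorem mycielskiScheme_succ_spec (n : ℕ) :
    (∀ s, mycielskiScheme hD n s.dropLast ++ [s.getLastD false] <+:
      mycielskiScheme hD (n + 1) s) ∧
    ∀ p ∈ {s : List Bool | s.length = n + 1} ×ˢ {s : List Bool | s.length = n + 1}, p.1 ≠ p.2 →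
      cyl (mycielskiScheme hD (n + 1) p.1) ×ˢ cyl (mycielskiScheme hD (n + 1) p.2) ⊆ D (n + 1) :=
  Classical.choose_spec <|
    exists_prefix_forall_prod_cyl_subset (hD (n + 1)).1 (hD (n + 1)).2
      ((List.finite_length_eq Bool (n + 1)).prod (List.finite_length_eq Bool (n + 1)))
      fun s => mycielskiScheme hD n s.dropLast ++ [s.getLastD false]

theorem prefix_mycielskiScheme_succ (x : ℕ → Bool) (n : ℕ) :
    mycielskiScheme hD n (initSeg x n) ++ [x n] <+:
      mycielskiScheme hD (n + 1) (initSeg x (n + 1)) := by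
  simpa [initSeg_succ] using (mycielskiScheme_succ_spec hD n).1 (initSeg x (n + 1))

theorem prod_cyl_mycielskiScheme_subset {n : ℕ} {s t : List Bool} (hs : s.length = n + 1)
    (ht : t.length = n + 1) (hst : s ≠ t) :
    cyl (mycielskiScheme hD (n + 1) s) ×ˢ cyl (mycielskiScheme hD (n + 1) t) ⊆ D (n + 1) :=
  (mycielskiScheme_succ_spec hD n).2 (s, t) ⟨hs, ht⟩ hst

theorem mycielskiScheme_prefix (x : ℕ → Bool) {m n : ℕ} (h : m ≤ n) :
    mycielskiScheme hD m (initSeg x m) <+: mycielskiScheme hD n (initSeg x n) := by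
  induction n, h using Nat.le_induction with
  | base => exact List.prefix_refl _
  | succ n _ ih =>
    exact ih.trans ((List.prefix_append _ _).trans (prefix_mycielskiScheme_succ hD x n))

theorem le_length_mycielskiScheme (x : ℕ → Bool) (n : ℕ) :
    n ≤ (mycielskiScheme hD n (initSeg x n)).length := by
  induction n with
  | zero => exact Nat.zero_le _
  | succ n ih =>
    simpa using (ih.trans_lt (by simp)).trans_le (prefix_mycielskiScheme_succ hD x n).length_le

noncomputable def mycielskiMap (x : ℕ → Bool) (i : ℕ) : Bool :=
  (mycielskiScheme hD (i + 1) (initSeg x (i + 1))).getD i false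

theorem mycielskiMap_mem_cyl (x : ℕ → Bool) (n : ℕ) :
    mycielskiMap hD x ∈ cyl (mycielskiScheme hD n (initSeg x n)) := by
  refine mem_cyl_iff.2 fun i hi => ?_
  have hi' : i < (mycielskiScheme hD (i + 1) (initSeg x (i + 1))).length :=
    le_length_mycielskiScheme hD x (i + 1)
  rw [mycielskiMap, List.getD_eq_getElem _ _ hi']
  rcases le_total (i + 1) n with h | h
  · exact (mycielskiScheme_prefix hD x h).getElem hi'
  · exact ((mycielskiScheme_prefix hD x h).getElem hi).symm

theorem continuous_mycielskiMap : Continuous (mycielskiMap hD) :=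
  continuous_pi fun i =>
    continuous_comp_initSeg (fun s => (mycielskiScheme hD (i + 1) s).getD i false) (i + 1)

end Cantor

open Cantor in
/-- **Mycielski's theorem** for the Cantor space. -/
theorem exists_continuous_forall_ne_mem_of_mem_residual {G : Set ((ℕ → Bool) × (ℕ → Bool))}
    (hG : G ∈ residual _) :
    ∃ φ : (ℕ → Bool) → ℕ → Bool, Continuous φ ∧ ∀ x y, x ≠ y → (φ x, φ y) ∈ G := by
  obtain ⟨D, hDa, hD, hDG⟩ := exists_antitone_isOpen_dense_of_mem_residual hG
  refine ⟨mycielskiMap hD, continuous_mycielskiMap hD, fun x y hxy =>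
    hDG (mem_iInter.2 fun k => ?_)⟩
  obtain ⟨i, hi⟩ := Function.ne_iff.1 hxy
  have hne : initSeg x (max k i + 1) ≠ initSeg y (max k i + 1) := fun h =>
    hi (initSeg_eq_initSeg_iff.1 h i (by omega))
  exact hDa (show k ≤ max k i + 1 by omega)
    (prod_cyl_mycielskiScheme_subset hD (length_initSeg _ _) (length_initSeg _ _) hne
      ⟨mycielskiMap_mem_cyl hD x _, mycielskiMap_mem_cyl hD y _⟩)

theorem MeasurableSet.exists_countable_sections_determined {α β : Type*} [MeasurableSpace α]
    [MeasurableSpace β] {S : Set (α × β)} (hS : MeasurableSet S) :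
    ∃ 𝓑 : Set (Set β), 𝓑.Countable ∧ (∀ B ∈ 𝓑, MeasurableSet B) ∧
      ∀ a b b', (∀ B ∈ 𝓑, b ∈ B ↔ b' ∈ B) → ((a, b) ∈ S ↔ (a, b') ∈ S) := by
  rw [← generateFrom_prod] at hS
  induction hS with
  | basic t ht =>
    obtain ⟨A, -, B, hB, rfl⟩ := ht
    exact ⟨{B}, countable_singleton B, by simpa using hB, fun a b b' h => by simp [h B rfl]⟩
  | empty => exact ⟨∅, countable_empty, by simp, fun _ _ _ _ => Iff.rfl⟩
  | compl t _ ih =>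
    obtain ⟨𝓑, hc, hm, hdet⟩ := ih
    exact ⟨𝓑, hc, hm, fun a b b' h => not_congr (hdet a b b' h)⟩
  | iUnion f _ ih =>
    choose 𝓑 hc hm hdet using ih
    refine ⟨⋃ n, 𝓑 n, countable_iUnion hc,
      fun B hB => (mem_iUnion.1 hB).elim fun n hn => hm n B hn, fun a b b' h => ?_⟩
    simp only [mem_iUnion]
    exact exists_congr fun n => hdet n a b b' fun B hB => h B (mem_iUnion_of_mem n hB)

theorem smoothRel_of_countable_separating {Y : Type} [MeasurableSpace Y] (F : Setoid Y)
    (𝓑 : Set (Set (Quotient F))) (h𝓑c : 𝓑.Countable) (h𝓑m : ∀ B ∈ 𝓑, MeasurableSet B)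
    (hsep : ∀ q q' : Quotient F, (∀ B ∈ 𝓑, q ∈ B ↔ q' ∈ B) → q = q') : SmoothRel F := by
  classical
  have := h𝓑c.to_subtype
  refine ⟨𝓑 → Bool, inferInstance, inferInstance, fun y B => decide (Quotient.mk F y ∈ B.1),
    measurable_pi_lambda _ fun B => measurable_to_bool ?_, fun y y' => ?_⟩
  · convert measurableSet_quotient.1 (h𝓑m B B.2) using 1
    ext y
    simp [Quotient.mk''_eq_mk]
  · rw [← Quotient.eq (r := F)]
    refine ⟨fun h => by simp only [h], fun h => hsep _ _ fun B hB => ?_⟩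
    simpa using congrFun h ⟨B, hB⟩

section QuotientProduct

variable {X Y : Type} [MeasurableSpace X] [StandardBorelSpace X]
  [MeasurableSpace Y] [StandardBorelSpace Y]

theorem CBER.exists_measurable_injective_mk_comp [Uncountable X] {E : Setoid X} (hE : CBER E) :
    ∃ j : Y → X, Measurable j ∧ Function.Injective fun y => Quotient.mk E (j y) := by
  obtain ⟨c, hcm, hci⟩ := MeasurableSpace.measurable_injection_nat_bool_of_countablySeparated Y
  let e : (ℕ → Bool) ≃ᵐ X :=
    (PolishSpace.measurableEquivNatBoolOfNotCountable (not_countable_iff.2 ‹_›)).symm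
  have hR : MeasurableSet {p : (ℕ → Bool) × (ℕ → Bool) | E.r (e p.1) (e p.2)} :=
    (e.measurable.prodMap e.measurable) hE.1
  obtain ⟨φ, hφc, hφ⟩ := exists_continuous_forall_ne_mem_of_mem_residual
    (hR.baireMeasurableSet.isMeagre_of_countable_sections fun x =>
      (hE.2 (e x)).preimage e.injective)
  exact ⟨e ∘ φ ∘ c, e.measurable.comp (hφc.measurable.comp hcm), fun y y' h =>
    hci (not_not.1 fun hne => hφ _ _ hne (Quotient.exact h))⟩

theorem qBorelRel_range_mk_comp {E : Setoid X} {F : Setoid Y}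
    (hE : MeasurableSet {p : X × X | E.r p.1 p.2}) (hF : MeasurableSet {p : Y × Y | F.r p.1 p.2})
    {j : Y → X} (hj : Measurable j) (hjE : Function.Injective fun y => Quotient.mk E (j y)) :
    QBorelRel E F (range fun y => (Quotient.mk E (j y), Quotient.mk F y)) := by
  set V := {q : (X × Y) × Y | E.r (j q.2) q.1.1 ∧ F.r q.2 q.1.2}
  have hV : MeasurableSet V :=
    (hE.preimage ((hj.comp measurable_snd).prodMk (measurable_fst.comp measurable_fst))).inter
      (hF.preimage (measurable_snd.prodMk (measurable_snd.comp measurable_fst)))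
  have hVinj : InjOn Prod.fst V := by
    rintro ⟨p, y⟩ ⟨hy, -⟩ ⟨p', y'⟩ ⟨hy', -⟩ (rfl : p = p')
    exact congrArg (Prod.mk p) (hjE (Quotient.sound (Setoid.trans hy (Setoid.symm hy'))))
  rw [QBorelRel]
  convert hV.image_of_measurable_injOn measurable_fst hVinj using 1
  ext ⟨x, y⟩
  simp [V, Quotient.eq]

end QuotientProduct

/-- if `F` is nonsmooth and `X` is uncountable, then some Borel subset of the
quotient product space `(X×Y, E×F)` is not in the product σ-algebra
`Bor(X/E) ⊗ Bor(Y/F)`. -/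
theorem stmt_9 {X Y : Type} [MeasurableSpace X] [StandardBorelSpace X] [Uncountable X]
    [MeasurableSpace Y] [StandardBorelSpace Y]
    (E : Setoid X) (hE : CBER E) (F : Setoid Y) (hF : CBER F)
    (hFns : ¬ SmoothRel F) :
    ∃ S : Set (Quotient E × Quotient F),
      MeasurableSet {p : X × Y | (Quotient.mk E p.1, Quotient.mk F p.2) ∈ S} ∧
      ¬ MeasurableSet S := by
  obtain ⟨j, hj, hjE⟩ := hE.exists_measurable_injective_mk_comp (Y := Y)
  refine ⟨_, qBorelRel_range_mk_comp hE.1 hF.1 hj hjE, fun hS => hFns ?_⟩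
  obtain ⟨𝓑, h𝓑c, h𝓑m, hdet⟩ := hS.exists_countable_sections_determined
  refine smoothRel_of_countable_separating F 𝓑 h𝓑c h𝓑m fun q q' hqq' => ?_
  induction q, q' using Quotient.inductionOn₂ with | h y y' => ?_
  obtain ⟨y'', hy''⟩ := (hdet (Quotient.mk E (j y)) _ _ hqq').1 ⟨y, rfl⟩
  obtain ⟨h₁, h₂⟩ := Prod.ext_iff.1 hy''
  exact hjE h₁ ▸ h₂
end

section
/- There exist a standard Borel space X and two Borel functions f, g : X → X such that the equivalence relation generated by f and g is a complete analytic (Σ¹₁-complete) subset of X × X; in particular it is analytic but not Borel. -/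
open MeasureTheory Set

/-- Analytic (Σ¹₁) subsets of a standard Borel space: the empty set or a Borel image of
Baire space. -/
def IsSigma11 {α : Type} [MeasurableSpace α] (s : Set α) : Prop :=
  s = ∅ ∨ ∃ g : (ℕ → ℕ) → α, Measurable g ∧ Set.range g = s

/-!
Baire space `𝒩` carries a universal analytic set `U ⊆ 𝒩 × 𝒩`: a real `x` codes the closed set of
branches of `ℕ → ℕ × ℕ` all of whose finite prefixes it marks, and projecting these closed sets
yields every analytic subset of `𝒩` as a section of `U`. A diagonal argument shows that `U` is not
Borel, and transporting `U` along `𝒩 × 𝒩 ≃ₜ 𝒩` gives a Σ¹₁-complete set `A = range f₀`.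
On `𝒩 × Bool`, the maps `(x, false) ↦ (f₀ x, true)` and `(x, false) ↦ (x₀, true)`, both fixing
`𝒩 × {true}`, generate the equivalence relation whose only non-trivial class is
`𝒩 × {false} ∪ A × {true}`; so `y ∈ A` iff `(x₀, true)` and `(y, true)` are related.
-/

open PiNat

namespace MeasureTheory.AnalyticSet

variable {α β : Type*} [TopologicalSpace α] [TopologicalSpace β]

theorem union {s t : Set α} (hs : AnalyticSet s) (ht : AnalyticSet t) : AnalyticSet (s ∪ t) := by
  rw [union_eq_iUnion]
  exact AnalyticSet.iUnion fun b => by cases b <;> assumption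

theorem prod {s : Set α} {t : Set β} (hs : AnalyticSet s) (ht : AnalyticSet t) :
    AnalyticSet (s ×ˢ t) := by
  obtain ⟨γ, _, _, f, hf, rfl⟩ := analyticSet_iff_exists_polishSpace_range.1 hs
  obtain ⟨δ, _, _, g, hg, rfl⟩ := analyticSet_iff_exists_polishSpace_range.1 ht
  rw [← range_prodMap]
  exact analyticSet_range_of_polishSpace (hf.prodMap hg)

end MeasureTheory.AnalyticSet

theorem isSigma11_iff_analyticSet {α : Type} [TopologicalSpace α] [MeasurableSpace α]
    [BorelSpace α] [SecondCountableTopology α] {s : Set α} :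
    IsSigma11 s ↔ AnalyticSet s := by
  constructor
  · rintro (rfl | ⟨f, hf, rfl⟩)
    · exact analyticSet_empty
    · rw [← image_univ]
      exact MeasurableSet.univ.analyticSet_image hf
  · rw [AnalyticSet_def]
    rintro (hs | ⟨f, hf, hfs⟩)
    · exact Or.inl hs
    · exact Or.inr ⟨f, hf.measurable, hfs⟩

section Collapse

variable {Y : Type*} {B : Set Y}

def CollapseRel (B : Set Y) (p q : Y) : Prop :=
  p = q ∨ p ∈ B ∧ q ∈ B

theorem equivalence_collapseRel (B : Set Y) : Equivalence (CollapseRel B) where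
  refl _ := Or.inl rfl
  symm := by
    rintro p q (rfl | ⟨hp, hq⟩)
    exacts [Or.inl rfl, Or.inr ⟨hq, hp⟩]
  trans := by
    rintro p q r (rfl | ⟨hp, hq⟩) (rfl | ⟨hq', hr⟩)
    exacts [Or.inl rfl, Or.inr ⟨hq', hr⟩, Or.inr ⟨hp, hq⟩, Or.inr ⟨hp, hr⟩]

theorem CollapseRel.le {S : Y → Y → Prop} (hS : Equivalence S) {c : Y} (hc : ∀ p ∈ B, S p c)
    {p q : Y} (h : CollapseRel B p q) : S p q := by
  rcases h with rfl | ⟨hp, hq⟩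
  exacts [hS.refl p, hS.trans (hc p hp) (hS.symm (hc q hq))]

theorem collapseRel_iff_mem {c q : Y} (hc : c ∈ B) : CollapseRel B c q ↔ q ∈ B :=
  ⟨by rintro (rfl | ⟨-, hq⟩); exacts [hc, hq], fun hq => Or.inr ⟨hc, hq⟩⟩

theorem analyticSet_setOf_collapseRel [TopologicalSpace Y] [PolishSpace Y]
    (hB : AnalyticSet B) : AnalyticSet {p : Y × Y | CollapseRel B p.1 p.2} := by
  change AnalyticSet (diagonal Y ∪ B ×ˢ B)
  exact isClosed_diagonal.analyticSet.union (hB.prod hB)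

theorem measurableSet_of_measurableSet_setOf_collapseRel [MeasurableSpace Y]
    (h : MeasurableSet {p : Y × Y | CollapseRel B p.1 p.2}) {c : Y} (hc : c ∈ B) :
    MeasurableSet B := by
  have : B = (fun q => (c, q)) ⁻¹' {p : Y × Y | CollapseRel B p.1 p.2} := by
    ext q
    exact (collapseRel_iff_mem hc).symm
  rw [this]
  exact measurable_prodMk_left h

end Collapse

section BigClass

variable {Y : Type*} {A : Set Y}

def toTop (h : Y → Y) : Y × Bool → Y × Bool
  | (y, false) => (h y, true)
  | (y, true) => (y, true)

theorem measurable_toTop [MeasurableSpace Y] {h : Y → Y} (hh : Measurable h) :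
    Measurable (toTop h) :=
  measurable_from_prod_countable_left fun b => by
    cases b
    exacts [hh.prodMk measurable_const, measurable_id.prodMk measurable_const]

def bigClass (A : Set Y) : Set (Y × Bool) :=
  univ ×ˢ {false} ∪ A ×ˢ {true}

@[simp]
theorem mk_true_mem_bigClass {y : Y} : (y, true) ∈ bigClass A ↔ y ∈ A := by
  simp [bigClass]

@[simp]
theorem mk_false_mem_bigClass {y : Y} : (y, false) ∈ bigClass A := by
  simp [bigClass]

theorem collapseRel_toTop {h : Y → Y} (hA : ∀ y, h y ∈ A) (p : Y × Bool) :
    CollapseRel (bigClass A) p (toTop h p) := by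
  rcases p with ⟨y, _ | _⟩
  exacts [Or.inr ⟨mk_false_mem_bigClass, mk_true_mem_bigClass.2 (hA y)⟩, Or.inl rfl]

theorem rel_of_mem_bigClass_range {S : Y × Bool → Y × Bool → Prop} (hS : Equivalence S)
    {f : Y → Y} {a : Y} (hf : ∀ p, S p (toTop f p)) (ha : ∀ p, S p (toTop (fun _ => a) p)) :
    ∀ p ∈ bigClass (range f), S p (a, true) := by
  rintro ⟨y, _ | _⟩ hy
  · exact ha (y, false)
  · obtain ⟨w, rfl⟩ := mk_true_mem_bigClass.1 hy
    exact hS.trans (hS.symm (hf (w, false))) (ha (w, false))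

theorem analyticSet_bigClass [TopologicalSpace Y] [PolishSpace Y] (hA : AnalyticSet A) :
    AnalyticSet (bigClass A) :=
  (isClosed_univ.analyticSet.prod (isClosed_discrete _).analyticSet).union
    (hA.prod (isClosed_discrete _).analyticSet)

theorem measurableSet_of_measurableSet_bigClass [MeasurableSpace Y]
    (h : MeasurableSet (bigClass A)) : MeasurableSet A := by
  have : A = (fun y => (y, true)) ⁻¹' bigClass A := by
    ext y
    exact mk_true_mem_bigClass.symm
  rw [this]
  exact measurable_prodMk_right h

end BigClass

section ClosedCode

variable {γ : Type*} [TopologicalSpace γ] [DiscreteTopology γ]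

theorem IsClosed.mem_of_forall_res_eq {F : Set (ℕ → γ)} (hF : IsClosed F) {w : ℕ → γ}
    (h : ∀ n, ∃ v ∈ F, res v n = res w n) : w ∈ F := by
  by_contra hw
  obtain ⟨_, ⟨x, n, rfl⟩, hwx, hsub⟩ :=
    (isTopologicalBasis_cylinders fun _ => γ).exists_subset_of_mem_open hw hF.isOpen_compl
  obtain ⟨v, hvF, hv⟩ := h n
  rw [cylinder_eq_res] at hwx hsub
  exact hsub (show res v n = res x n from hv.trans hwx) hvF

theorem isLocallyConstant_res (n : ℕ) : IsLocallyConstant fun w : ℕ → γ => res w n := by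
  refine (IsLocallyConstant.iff_eventually_eq _).2 fun w => ?_
  filter_upwards [(isOpen_cylinder (fun _ => γ) w n).mem_nhds (self_mem_cylinder w n)] with v hv
  rwa [cylinder_eq_res] at hv

variable [Encodable γ]

def closedCode (x : ℕ → ℕ) : Set (ℕ → γ) :=
  {w | ∀ n, x (Encodable.encode (res w n)) = 0}

theorem exists_closedCode_eq {F : Set (ℕ → γ)} (hF : IsClosed F) :
    ∃ x, closedCode x = F := by
  classical
  refine ⟨fun m => if ∃ v ∈ F, ∃ n, Encodable.encode (res v n) = m then 0 else 1, ?_⟩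
  ext w
  simp only [closedCode, mem_ofPred_eq, ite_eq_left_iff, one_ne_zero, imp_false, not_not]
  refine ⟨fun h => hF.mem_of_forall_res_eq fun n => ?_, fun hw n => ⟨w, hw, n, rfl⟩⟩
  obtain ⟨v, hvF, k, hk⟩ := h n
  have hres := Encodable.encode_injective hk
  obtain rfl : k = n := by simpa using congrArg List.length hres
  exact ⟨v, hvF, hres⟩

theorem measurableSet_setOf_mem_closedCode [MeasurableSpace γ] [BorelSpace γ] :
    MeasurableSet {t : (ℕ → ℕ) × (ℕ → γ) | t.2 ∈ closedCode t.1} := by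
  have hcode (n : ℕ) : Measurable fun w : ℕ → γ => Encodable.encode (res w n) :=
    ((isLocallyConstant_res n).comp _).continuous.measurable
  have heval : Measurable fun p : (ℕ → ℕ) × ℕ => p.1 p.2 :=
    measurable_from_prod_countable_left fun m => measurable_pi_apply m
  have : {t : (ℕ → ℕ) × (ℕ → γ) | t.2 ∈ closedCode t.1} =
      ⋂ n, (fun t => t.1 (Encodable.encode (res t.2 n))) ⁻¹' {0} := by
    ext t
    simp [closedCode]
  rw [this]
  exact .iInter fun n =>
    (heval.comp (measurable_fst.prodMk ((hcode n).comp measurable_snd))) (measurableSet_singleton 0)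

end ClosedCode

theorem MeasureTheory.AnalyticSet.exists_isClosed_forall_mem_iff {A : Set (ℕ → ℕ)}
    (hA : AnalyticSet A) :
    ∃ F : Set (ℕ → ℕ × ℕ), IsClosed F ∧ ∀ z, z ∈ A ↔ ∃ y : ℕ → ℕ, (fun i => (z i, y i)) ∈ F := by
  rw [AnalyticSet_def] at hA
  rcases hA with rfl | ⟨f, hf, rfl⟩
  · exact ⟨∅, isClosed_empty, by simp⟩
  · refine ⟨{w | f (fun i => (w i).2) = fun i => (w i).1}, isClosed_eq ?_ ?_, fun z => ?_⟩
    · exact hf.comp (continuous_pi fun i => continuous_snd.comp (continuous_apply i))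
    · exact continuous_pi fun i => continuous_fst.comp (continuous_apply i)
    · exact Iff.rfl

def universalAnalyticSet : Set ((ℕ → ℕ) × (ℕ → ℕ)) :=
  {p | ∃ y : ℕ → ℕ, (fun i => (p.2 i, y i)) ∈ closedCode p.1}

theorem universalAnalyticSet_nonempty : universalAnalyticSet.Nonempty :=
  ⟨(fun _ => 0, fun _ => 0), fun _ => 0, fun _ => rfl⟩

theorem analyticSet_universalAnalyticSet : AnalyticSet universalAnalyticSet := by
  have : universalAnalyticSet = (fun t : (ℕ → ℕ) × (ℕ → ℕ × ℕ) => (t.1, fun i => (t.2 i).1)) ''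
      {t | t.2 ∈ closedCode t.1} := by
    ext ⟨x, z⟩
    constructor
    · rintro ⟨y, hy⟩
      exact ⟨(x, fun i => (z i, y i)), hy, rfl⟩
    · rintro ⟨⟨x, w⟩, hw, h⟩
      cases h
      exact ⟨fun i => (w i).2, hw⟩
  rw [this]
  exact measurableSet_setOf_mem_closedCode.analyticSet_image (by fun_prop)

theorem MeasureTheory.AnalyticSet.exists_mem_iff_mem_universalAnalyticSet {A : Set (ℕ → ℕ)}
    (hA : AnalyticSet A) : ∃ x, ∀ z, z ∈ A ↔ (x, z) ∈ universalAnalyticSet := by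
  obtain ⟨F, hF, hAF⟩ := hA.exists_isClosed_forall_mem_iff
  obtain ⟨x, rfl⟩ := exists_closedCode_eq hF
  exact ⟨x, hAF⟩

theorem not_measurableSet_of_forall_exists_mem_iff {α : Type*} [MeasurableSpace α]
    {U : Set (α × α)} (hU : ∀ s, MeasurableSet s → ∃ x, ∀ z, z ∈ s ↔ (x, z) ∈ U) :
    ¬ MeasurableSet U := fun hUm => by
  obtain ⟨x, hx⟩ := hU {z | (z, z) ∉ U} ((measurable_id.prodMk measurable_id) hUm.compl)
  exact iff_not_self (hx x).symm

theorem not_measurableSet_universalAnalyticSet : ¬ MeasurableSet universalAnalyticSet :=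
  not_measurableSet_of_forall_exists_mem_iff fun _ hs =>
    hs.analyticSet.exists_mem_iff_mem_universalAnalyticSet

theorem exists_complete_analyticSet :
    ∃ A : Set (ℕ → ℕ), AnalyticSet A ∧ ¬ MeasurableSet A ∧ ∀ A' : Set (ℕ → ℕ), AnalyticSet A' →
      ∃ ρ : (ℕ → ℕ) → ℕ → ℕ, Continuous ρ ∧ ∀ z, z ∈ A' ↔ ρ z ∈ A := by
  let e : (ℕ → ℕ) × (ℕ → ℕ) ≃ₜ (ℕ → ℕ) := Homeomorph.sumArrowHomeomorphProdArrow.symm.trans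
    (Homeomorph.piCongrLeft (Y := fun _ => ℕ) Equiv.natSumNatEquivNat)
  refine ⟨e '' universalAnalyticSet, analyticSet_universalAnalyticSet.image_of_continuous
    e.continuous, fun h => ?_, fun A' hA' => ?_⟩
  · apply not_measurableSet_universalAnalyticSet
    rw [← e.preimage_image universalAnalyticSet]
    exact e.continuous.measurable h
  · obtain ⟨x, hx⟩ := hA'.exists_mem_iff_mem_universalAnalyticSet
    exact ⟨fun z => e (x, z), by fun_prop, fun z => (hx z).trans e.injective.mem_set_image.symm⟩

/-- there are a standard Borel space `X` and Borel maps `f, g : X → X` whose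
generated equivalence relation is a Σ¹₁-complete subset of `X × X`; in particular it is
analytic but not Borel. -/
theorem stmt_12 :
    ∃ (X : Type) (_ : MeasurableSpace X) (_ : StandardBorelSpace X) (f g : X → X),
      Measurable f ∧ Measurable g ∧
      ∃ R : X → X → Prop, Equivalence R ∧
        (∀ x, R x (f x)) ∧ (∀ x, R x (g x)) ∧
        (∀ S : X → X → Prop, Equivalence S → (∀ x, S x (f x)) → (∀ x, S x (g x)) →
          ∀ x y, R x y → S x y) ∧
        IsSigma11 {p : X × X | R p.1 p.2} ∧
        ¬ MeasurableSet {p : X × X | R p.1 p.2} ∧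
        ∀ A : Set (ℕ → ℕ), IsSigma11 A →
          ∃ ρ : (ℕ → ℕ) → X × X, Measurable ρ ∧ ∀ z, z ∈ A ↔ R (ρ z).1 (ρ z).2 := by
  obtain ⟨A, hA, hAm, hAcomplete⟩ := exists_complete_analyticSet
  obtain ⟨f₀, hf₀, rfl⟩ : ∃ f₀ : (ℕ → ℕ) → ℕ → ℕ, Continuous f₀ ∧ range f₀ = A := by
    rw [AnalyticSet_def] at hA
    exact hA.resolve_left fun h => hAm (h ▸ MeasurableSet.empty)
  set x₀ := f₀ 0
  have hx₀ : (x₀, true) ∈ bigClass (range f₀) := mk_true_mem_bigClass.2 (mem_range_self 0)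
  refine ⟨(ℕ → ℕ) × Bool, inferInstance, inferInstance, toTop f₀, toTop fun _ => x₀,
    measurable_toTop hf₀.measurable, measurable_toTop measurable_const,
    CollapseRel (bigClass (range f₀)), equivalence_collapseRel _,
    collapseRel_toTop mem_range_self, collapseRel_toTop fun _ => mem_range_self 0,
    fun S hS hf hg _ _ => CollapseRel.le hS (rel_of_mem_bigClass_range hS hf hg),
    isSigma11_iff_analyticSet.2 (analyticSet_setOf_collapseRel (analyticSet_bigClass hA)),
    fun h => hAm (measurableSet_of_measurableSet_bigClass
      (measurableSet_of_measurableSet_setOf_collapseRel h hx₀)), fun A' hA' => ?_⟩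
  obtain ⟨ρ, hρ, hA'ρ⟩ := hAcomplete A' (isSigma11_iff_analyticSet.1 hA')
  refine ⟨fun z => ((x₀, true), (ρ z, true)), by fun_prop, fun z => ?_⟩
  rw [hA'ρ, collapseRel_iff_mem hx₀, mk_true_mem_bigClass]
end

section
/- Every Borel equivalence relation F of index ≤ 2 on a quotient Borel space (X,E) is the orbit equivalence relation of a Borel action of ℤ/2ℤ on (X,E); explicitly, the map f sending x to the unique point y ≠ x with x F y when it exists, and to x otherwise, is a Borel involution of (X,E) generating F. -/
open MeasureTheory Set

/-!
The graph of the involution `partner F`, pulled back to `X × X`, is `C ∪ (E ∩ (Aᶜ × X))`, where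
`C = F \ E` is Borel with countable sections (the section at `x` lies in the `E`-class of the
partner of `[x]`) and `A` is the projection of `C`. So everything rests on the Lusin–Novikov fact
that such a projection is Borel, i.e. that a countable-to-one continuous image of a Polish space
is Borel.

For that, call `T ⊆ α` separable if it is Borel-separated from the complement of `range f`.
If `f` is injective on `B ∩ f⁻¹' T` with `T` analytic, the Lusin separation theorem shrinks
`B ∩ f⁻¹' T` to a Borel set on which `f` is still injective, and the Lusin–Souslin theorem makes
its image Borel: `T ∩ f '' B` is separable. Applied off the union of all separable refinements,
this shows that if `T ∩ f '' B` is not separable, neither is `T ∩ f '' B₀ ∩ f '' B₁` for some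
pair of disjoint small closed sets `B₀, B₁ ⊆ B` from a countable family separating points.
If `range f` were not separable, splitting all nodes level by level gives a Cantor scheme of
closed sets whose images at each level have a non-separable, hence nonempty, intersection; points
of these intersections converge to a single point whose fibre contains the `2 ^ ℵ₀` limits of the
branches.
-/

open Metric TopologicalSpace Filter Topology

theorem analyticSet_iInter_of_polishSpace {α ι : Type*} [TopologicalSpace α] [PolishSpace α]
    [Countable ι] {s : ι → Set α} (hs : ∀ i, AnalyticSet (s i)) : AnalyticSet (⋂ i, s i) := by
  rcases isEmpty_or_nonempty ι with hι | hι
  · rw [iInter_of_empty]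
    exact isClosed_univ.analyticSet
  · exact AnalyticSet.iInter hs

theorem MeasureTheory.AnalyticSet.inter {α : Type*} [TopologicalSpace α] [T2Space α] {s t : Set α}
    (hs : AnalyticSet s) (ht : AnalyticSet t) : AnalyticSet (s ∩ t) := by
  rw [inter_eq_iInter]
  exact AnalyticSet.iInter fun b => by cases b <;> assumption

theorem not_countable_nat_bool : ¬ Countable (ℕ → Bool) := by
  rw [← Cardinal.mk_le_aleph0_iff, not_le]
  simpa using Cardinal.cantor Cardinal.aleph0

theorem MeasureTheory.MeasurablySeparable.mono_left {α : Type*} [MeasurableSpace α]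
    {s s' t : Set α} (h : MeasurablySeparable s t) (hs : s' ⊆ s) : MeasurablySeparable s' t :=
  let ⟨u, hsu, htu, hu⟩ := h
  ⟨u, hs.trans hsu, htu, hu⟩

theorem exists_separating_closed_family {Z : Type*} [MetricSpace Z] [SeparableSpace Z] {ε : ℝ}
    (hε : 0 < ε) :
    ∃ K : ℕ × ℕ × ℕ → Bool → Set Z, (∀ n b, IsClosed (K n b)) ∧
      (∀ n b, ediam (K n b) ≤ ENNReal.ofReal ε) ∧ (∀ n, Disjoint (K n false) (K n true)) ∧
      ∀ z w, z ≠ w → ∃ n, z ∈ K n false ∧ w ∈ K n true := by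
  classical
  rcases isEmpty_or_nonempty Z with hZ | hZ
  · exact ⟨fun _ _ => ∅, by simp, by simp, by simp, fun z => isEmptyElim z⟩
  let r : ℕ → ℝ := fun m => min (ε / 2) (1 / (m + 1))
  let Q : ℕ × ℕ × ℕ → Bool → Set Z := fun i b =>
    closedBall (denseSeq Z (cond b i.2.1 i.1)) (r i.2.2)
  refine ⟨fun i b => if Disjoint (Q i false) (Q i true) then Q i b else ∅, fun i b => ?_,
    fun i b => ?_, fun i => ?_, fun z w hzw => ?_⟩
  · dsimp only
    split_ifs
    exacts [isClosed_closedBall, isClosed_empty]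
  · dsimp only
    split_ifs
    · refine ediam_le_of_forall_dist_le fun x hx y hy => ?_
      calc dist x y
          ≤ dist x (denseSeq Z (cond b i.2.1 i.1)) + dist y (denseSeq Z (cond b i.2.1 i.1)) :=
            dist_triangle_right _ _ _
        _ ≤ ε / 2 + ε / 2 := add_le_add ((mem_closedBall.1 hx).trans (min_le_left _ _))
            ((mem_closedBall.1 hy).trans (min_le_left _ _))
        _ = ε := add_halves ε
    · simp
  · dsimp only
    split_ifs with h
    exacts [h, disjoint_empty _]
  · obtain ⟨m, hm⟩ := exists_nat_one_div_lt (show 0 < dist z w / 4 by positivity [dist_pos.2 hzw])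
    have hr : 0 < r m := lt_min (half_pos hε) Nat.one_div_pos_of_nat
    obtain ⟨a, ha⟩ := (denseRange_denseSeq Z).exists_dist_lt z hr
    obtain ⟨c, hc⟩ := (denseRange_denseSeq Z).exists_dist_lt w hr
    have hdisj : Disjoint (Q (a, c, m) false) (Q (a, c, m) true) := by
      refine disjoint_left.2 fun u hua huc => ?_
      have hua : dist u (denseSeq Z a) ≤ r m := hua
      have huc : dist u (denseSeq Z c) ≤ r m := huc
      have := dist_triangle4 z (denseSeq Z a) u w
      have := dist_triangle_right u w (denseSeq Z c)
      rw [dist_comm] at hua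
      linarith [min_le_right (ε / 2) (1 / ((m : ℝ) + 1))]
    refine ⟨(a, c, m), ?_, ?_⟩ <;> simp only [if_pos hdisj]
    exacts [mem_closedBall.2 ha.le, mem_closedBall.2 hc.le]

namespace LusinNovikov

variable {Z α : Type*} [TopologicalSpace α] {f : Z → α}

section

variable [PolishSpace α] [MeasurableSpace α] [BorelSpace α]

section

variable [TopologicalSpace Z] [PolishSpace Z] [MeasurableSpace Z] [BorelSpace Z]

theorem measurablySeparable_inter_image_of_injOn (hf : Continuous f) {T : Set α}
    (hT : AnalyticSet T) {B : Set Z} (hB : MeasurableSet B) (hinj : InjOn f (B ∩ f ⁻¹' T)) :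
    MeasurablySeparable (T ∩ f '' B) (range f)ᶜ := by
  set twins : Set Z := Prod.fst '' ((B ×ˢ B) ∩ {p | p.1 ≠ p.2} ∩ {p | f p.1 = f p.2})
  have htwins : AnalyticSet twins := by
    refine MeasurableSet.analyticSet ?_ |>.image_of_continuous continuous_fst
    exact ((hB.prod hB).inter (isOpen_ne_fun continuous_fst continuous_snd).measurableSet).inter
      (isClosed_eq (hf.comp continuous_fst) (hf.comp continuous_snd)).measurableSet
  have hdisj : Disjoint (B ∩ f ⁻¹' T) twins := by
    rw [disjoint_left]
    rintro z hz ⟨⟨z', w⟩, ⟨⟨⟨-, hwB⟩, hne⟩, hfzw : f z' = f w⟩, rfl⟩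
    exact hne (hinj hz ⟨hwB, show f w ∈ T from hfzw ▸ hz.2⟩ hfzw)
  obtain ⟨M, hBM, htwinsM, hM⟩ :=
    (hB.analyticSet.inter (hT.preimage hf)).measurablySeparable htwins hdisj
  have hinjM : InjOn f (B ∩ M) := by
    intro z hz w hw hzw
    by_contra hne
    exact disjoint_left.1 htwinsM ⟨(z, w), ⟨⟨⟨hz.1, hw.1⟩, hne⟩, hzw⟩, rfl⟩ hz.2
  refine ⟨f '' (B ∩ M), ?_, ?_, (hB.inter hM).image_of_continuousOn_injOn hf.continuousOn hinjM⟩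
  · rintro _ ⟨hxT, z, hzB, rfl⟩
    exact ⟨z, ⟨hzB, hBM ⟨hzB, hxT⟩⟩, rfl⟩
  · exact disjoint_compl_left_iff_subset.2 (image_subset_range _ _)

theorem exists_not_measurablySeparable_inter_iInter_image (hf : Continuous f)
    {κ : Type*} [Countable κ] {K : κ → Bool → Set Z}
    (hK : ∀ z w, z ≠ w → ∃ n, z ∈ K n false ∧ w ∈ K n true) {T : Set α} (hT : AnalyticSet T)
    {B : Set Z} (hB : MeasurableSet B) (hns : ¬ MeasurablySeparable (T ∩ f '' B) (range f)ᶜ) :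
    ∃ n, ¬ MeasurablySeparable (T ∩ ⋂ b, f '' (B ∩ K n b)) (range f)ᶜ := by
  by_contra! hsep
  choose S hTS hSdisj hS using hsep
  have hJ : MeasurableSet (⋃ n, S n) := MeasurableSet.iUnion hS
  -- a point of `T` with two preimages in `B` lies in some `S n`
  have hinj : InjOn f (B ∩ f ⁻¹' (T \ ⋃ n, S n)) := by
    rintro z ⟨hzB, hzT, hzJ⟩ w ⟨hwB, -⟩ hzw
    by_contra hne
    obtain ⟨n, hz, hw⟩ := hK z w hne
    refine hzJ (mem_iUnion_of_mem n (hTS n ⟨hzT, mem_iInter.2 fun b => ?_⟩))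
    cases b
    exacts [⟨z, ⟨hzB, hz⟩, rfl⟩, ⟨w, ⟨hwB, hw⟩, hzw.symm⟩]
  obtain ⟨M, hM, hMdisj, hMmeas⟩ :=
    measurablySeparable_inter_image_of_injOn hf (hT.inter hJ.compl.analyticSet) hB hinj
  refine hns ⟨M ∪ ⋃ n, S n, ?_, ?_, hMmeas.union hJ⟩
  · rintro x ⟨hxT, hxB⟩
    by_cases hxJ : x ∈ ⋃ n, S n
    · exact Or.inr hxJ
    · exact Or.inl (hM ⟨⟨hxT, hxJ⟩, hxB⟩)
  · exact disjoint_union_right.2 ⟨hMdisj, disjoint_iUnion_right.2 hSdisj⟩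

theorem exists_not_measurablySeparable_inter_biInter_iInter_image (hf : Continuous f)
    {κ : Type*} [Countable κ] [Nonempty κ] {K : κ → Bool → Set Z}
    (hKm : ∀ n b, MeasurableSet (K n b)) (hK : ∀ z w, z ≠ w → ∃ n, z ∈ K n false ∧ w ∈ K n true)
    {ι : Type*} {s : Set ι} (hs : s.Finite) {B : ι → Set Z} (hB : ∀ i, MeasurableSet (B i)) {T : Set α}
    (hT : AnalyticSet T) (hns : ¬ MeasurablySeparable (T ∩ ⋂ i ∈ s, f '' B i) (range f)ᶜ) :
    ∃ k : ι → κ, ¬ MeasurablySeparable (T ∩ ⋂ i ∈ s, ⋂ b, f '' (B i ∩ K (k i) b)) (range f)ᶜ := by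
  classical
  have himage : ∀ i, AnalyticSet (f '' B i) := fun i => (hB i).analyticSet.image_of_continuous hf
  induction s, hs using Set.Finite.induction_on generalizing T with
  | empty =>
    exact ⟨fun _ => Classical.arbitrary κ, by simpa using hns⟩
  | @insert a s ha hs ih =>
    rw [biInter_insert, ← inter_assoc] at hns
    obtain ⟨k, hk⟩ := ih (hT.inter (himage a)) hns
    rw [inter_right_comm] at hk
    have hanalytic : AnalyticSet (T ∩ ⋂ i ∈ s, ⋂ b, f '' (B i ∩ K (k i) b)) := by
      refine hT.inter ?_
      rw [biInter_eq_iInter]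
      have := hs.countable.to_subtype
      exact analyticSet_iInter_of_polishSpace fun i => analyticSet_iInter_of_polishSpace fun b =>
        ((hB i).inter (hKm _ _)).analyticSet.image_of_continuous hf
    obtain ⟨n, hn⟩ := exists_not_measurablySeparable_inter_iInter_image hf hK hanalytic (hB a) hk
    refine ⟨Function.update k a n, ?_⟩
    have hk' : ∀ i ∈ s, Function.update k a n i = k i := fun i hi =>
      Function.update_of_ne (ne_of_mem_of_not_mem hi ha) _ _
    rw [biInter_insert, Function.update_self, iInter₂_congr (fun i hi => by rw [hk' i hi]),
      inter_comm (⋂ b, f '' (B a ∩ K n b)), ← inter_assoc]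
    exact hn

end

variable [MetricSpace Z] [CompleteSpace Z] [SecondCountableTopology Z] [MeasurableSpace Z]
  [BorelSpace Z]

theorem exists_refinement (hf : Continuous f) {n : ℕ} {A : List Bool → Set Z}
    (hA : ∀ l, IsClosed (A l))
    (hns : ¬ MeasurablySeparable (⋂ l ∈ {l : List Bool | l.length = n}, f '' A l) (range f)ᶜ)
    {ε : ℝ} (hε : 0 < ε) :
    ∃ A' : List Bool → Set Z, (∀ l, IsClosed (A' l)) ∧
      ¬ MeasurablySeparable (⋂ l ∈ {l : List Bool | l.length = n + 1}, f '' A' l) (range f)ᶜ ∧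
      ∀ l, (∀ b, A' (b :: l) ⊆ A l ∧ ediam (A' (b :: l)) ≤ ENNReal.ofReal ε) ∧
        Disjoint (A' (false :: l)) (A' (true :: l)) := by
  obtain ⟨K, hKc, hKd, hKdisj, hK⟩ := exists_separating_closed_family (Z := Z) hε
  obtain ⟨k, hk⟩ := exists_not_measurablySeparable_inter_biInter_iInter_image hf
    (fun n b => (hKc n b).measurableSet) hK (List.finite_length_eq Bool n)
    (fun l => (hA l).measurableSet) isClosed_univ.analyticSet (by rwa [univ_inter])
  let A' : List Bool → Set Z := fun
    | [] => univ
    | b :: l => A l ∩ K (k l) b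
  refine ⟨A', ?_, fun hsep => hk (hsep.mono_left ?_), fun l => ⟨fun b => ⟨inter_subset_left,
    (ediam_mono inter_subset_right).trans (hKd _ _)⟩, (hKdisj _).mono inter_subset_right
    inter_subset_right⟩⟩
  · rintro (_ | ⟨b, l⟩)
    exacts [isClosed_univ, (hA l).inter (hKc _ _)]
  · rintro x ⟨-, hx⟩
    simp only [mem_iInter] at hx ⊢
    rintro (_ | ⟨b, l⟩) hl
    · simp at hl
    · exact hx l (by simpa using hl) b

theorem exists_cantorScheme (hf : Continuous f)
    (hns : ¬ MeasurablySeparable (range f) (range f)ᶜ) :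
    ∃ A : List Bool → Set Z, (∀ l, IsClosed (A l)) ∧ CantorScheme.Antitone A ∧
      CantorScheme.Disjoint A ∧ CantorScheme.VanishingDiam A ∧
      ∀ n, ¬ MeasurablySeparable (⋂ l ∈ {l : List Bool | l.length = n}, f '' A l) (range f)ᶜ := by
  let Good (n : ℕ) (A : List Bool → Set Z) : Prop := (∀ l, IsClosed (A l)) ∧
    ¬ MeasurablySeparable (⋂ l ∈ {l : List Bool | l.length = n}, f '' A l) (range f)ᶜ
  have step (n : ℕ) (A : {A // Good n A}) : ∃ A' : {A' // Good (n + 1) A'}, ∀ l,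
      (∀ b, A'.1 (b :: l) ⊆ A.1 l ∧ ediam (A'.1 (b :: l)) ≤ ENNReal.ofReal (1 / (n + 1))) ∧
        Disjoint (A'.1 (false :: l)) (A'.1 (true :: l)) := by
    obtain ⟨A', hA'c, hA'ns, hA'⟩ := exists_refinement hf A.2.1 A.2.2 Nat.one_div_pos_of_nat
    exact ⟨⟨A', hA'c, hA'ns⟩, hA'⟩
  choose next hnext using step
  have hgood₀ : Good 0 fun _ => univ := by
    refine ⟨fun _ => isClosed_univ, ?_⟩
    simpa [List.length_eq_zero_iff] using hns
  let S : ∀ n, {A // Good n A} := fun n => Nat.rec ⟨_, hgood₀⟩ next n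
  refine ⟨fun l => (S l.length).1 l, fun l => (S l.length).2.1 l,
    fun l b => ((hnext _ _ l).1 b).1, fun l => ?_, fun ξ => ?_, fun n => ?_⟩
  · rintro (_ | _) (_ | _) hab
    exacts [(hab rfl).elim, (hnext _ _ l).2, (hnext _ _ l).2.symm, (hab rfl).elim]
  · have hlim : Tendsto (fun n : ℕ => ENNReal.ofReal (1 / ((n : ℝ) + 1))) atTop (𝓝 0) := by
      simpa using ENNReal.tendsto_ofReal tendsto_one_div_add_atTop_nhds_zero_nat
    rw [← tendsto_add_atTop_iff_nat 1]
    refine tendsto_of_tendsto_of_tendsto_of_le_of_le tendsto_const_nhds hlim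
      (fun _ => bot_le) fun n => ?_
    rw [PiNat.res_succ]
    refine (((hnext _ (S (PiNat.res ξ n).length) (PiNat.res ξ n)).1 (ξ n)).2).trans_eq ?_
    rw [PiNat.res_length]
  · have hS : ⋂ l ∈ {l : List Bool | l.length = n}, f '' (S l.length).1 l =
        ⋂ l ∈ {l : List Bool | l.length = n}, f '' (S n).1 l :=
      iInter₂_congr fun l (hl : l.length = n) => by rw [hl]
    exact hS ▸ (S n).2.2

end

theorem exists_not_countable_preimage_of_cantorScheme [T2Space α] [MetricSpace Z]
    [CompleteSpace Z] (hf : Continuous f)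
    {A : List Bool → Set Z} (hA : ∀ l, IsClosed (A l)) (hanti : CantorScheme.Antitone A)
    (hdisj : CantorScheme.Disjoint A) (hdiam : CantorScheme.VanishingDiam A)
    (hne : ∀ n, (⋂ l ∈ {l : List Bool | l.length = n}, f '' A l).Nonempty) :
    ∃ x, ¬ (f ⁻¹' {x}).Countable := by
  choose x hx using hne
  have hxA (l : List Bool) : x l.length ∈ f '' A l := mem_iInter₂.1 (hx l.length) l rfl
  have htotal := (hanti.closureAntitone hA).map_of_vanishingDiam hdiam fun l =>
    Set.Nonempty.of_image ⟨_, hxA l⟩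
  let z : (ℕ → Bool) → Z := fun ξ => (CantorScheme.inducedMap A).2 ⟨ξ, htotal ▸ mem_univ ξ⟩
  have hz (ξ : ℕ → Bool) (n : ℕ) : z ξ ∈ A (PiNat.res ξ n) := CantorScheme.map_mem _ n
  have hzinj : Function.Injective z := fun ξ η h => congrArg Subtype.val (hdisj.map_injective h)
  have hbranch (ξ : ℕ → Bool) : Antitone fun n => A (PiNat.res ξ n) :=
    antitone_nat_of_succ_le fun n => by rw [PiNat.res_succ]; exact hanti _ _
  have hlim (ξ : ℕ → Bool) : Tendsto x atTop (𝓝 (f (z ξ))) := by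
    have (n : ℕ) : ∃ w ∈ A (PiNat.res ξ n), f w = x n := by
      simpa [PiNat.res_length] using hxA (PiNat.res ξ n)
    choose w hwA hwx using this
    have hw : Tendsto w atTop (𝓝 (z ξ)) := by
      refine Metric.tendsto_atTop.2 fun ε hε => ?_
      obtain ⟨N, hN⟩ := hdiam.dist_lt ε hε ξ
      exact ⟨N, fun n hn => hN _ (hbranch ξ hn (hwA n)) _ (hbranch ξ hn (hz ξ n))⟩
    simpa only [Function.comp_def, hwx] using (hf.tendsto _).comp hw
  have hconst (ξ : ℕ → Bool) : f (z ξ) = f (z fun _ => false) :=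
    tendsto_nhds_unique (hlim ξ) (hlim _)
  refine ⟨f (z fun _ => false), fun hcount => not_countable_nat_bool ?_⟩
  have := hcount.to_subtype
  exact Function.Injective.countable (f := fun ξ => (⟨z ξ, hconst ξ⟩ : f ⁻¹' {_}))
    fun ξ η h => hzinj (congrArg Subtype.val h)

end LusinNovikov

open LusinNovikov in
theorem Continuous.measurableSet_range_of_countable_preimage {Z α : Type*} [TopologicalSpace Z]
    [PolishSpace Z] [TopologicalSpace α] [PolishSpace α] [MeasurableSpace α] [BorelSpace α]
    {f : Z → α} (hf : Continuous f) (hfib : ∀ x, (f ⁻¹' {x}).Countable) :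
    MeasurableSet (range f) := by
  borelize Z
  let := upgradeIsCompletelyMetrizable Z
  by_contra hmeas
  have hns : ¬ MeasurablySeparable (range f) (range f)ᶜ := fun ⟨u, hfu, hu, hmu⟩ =>
    hmeas (by rwa [hfu.antisymm (disjoint_compl_left_iff_subset.1 hu)])
  obtain ⟨A, hA, hanti, hdisj, hdiam, hAns⟩ := exists_cantorScheme hf hns
  obtain ⟨x, hx⟩ := exists_not_countable_preimage_of_cantorScheme hf hA hanti hdisj hdiam
    fun n => nonempty_iff_ne_empty.2 fun h =>
      hAns n ⟨∅, h.subset, disjoint_empty _, MeasurableSet.empty⟩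
  exact hx (hfib x)

theorem Measurable.measurableSet_range_of_countable_preimage {Q X : Type*} [MeasurableSpace Q]
    [StandardBorelSpace Q] [MeasurableSpace X] [StandardBorelSpace X] {f : Q → X}
    (hf : Measurable f) (hfib : ∀ x, (f ⁻¹' {x}).Countable) : MeasurableSet (range f) := by
  let := upgradeStandardBorel Q
  let := upgradeStandardBorel X
  obtain ⟨t, -, hft, hpolish⟩ := hf.exists_continuous
  exact @Continuous.measurableSet_range_of_countable_preimage Q X t hpolish _ _ _ _ f hft hfib

theorem measurableSet_image_fst_of_countable_sections {X Y : Type*} [MeasurableSpace X]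
    [StandardBorelSpace X] [MeasurableSpace Y] [StandardBorelSpace Y] {C : Set (X × Y)}
    (hC : MeasurableSet C) (hsec : ∀ x, {y | (x, y) ∈ C}.Countable) :
    MeasurableSet (Prod.fst '' C) := by
  have := hC.standardBorel
  have hfib (x : X) : ((Prod.fst ∘ Subtype.val : C → X) ⁻¹' {x}).Countable := by
    refine (((hsec x).image (Prod.mk x)).preimage Subtype.val_injective).mono ?_
    rintro ⟨⟨x', y⟩, hp⟩ (rfl : x' = x)
    exact ⟨y, hp, rfl⟩
  rw [← Subtype.range_coe (s := C), ← range_comp]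
  exact (measurable_fst.comp measurable_subtype_coe).measurableSet_range_of_countable_preimage hfib

section Partner

variable {α : Type*}

open Classical in
noncomputable def partner (F : α → α → Prop) (u : α) : α :=
  if h : ∃ v, F u v ∧ v ≠ u then h.choose else u

variable {F : α → α → Prop} {u v : α}

theorem partner_spec (h : ∃ v, F u v ∧ v ≠ u) : F u (partner F u) ∧ partner F u ≠ u := by
  rw [partner, dif_pos h]
  exact h.choose_spec

theorem partner_of_not_exists (h : ¬∃ v, F u v ∧ v ≠ u) : partner F u = u := by
  rw [partner, dif_neg h]

variable (hidx : ∀ x y z, F x y → F x z → x = y ∨ x = z ∨ y = z)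
include hidx

theorem partner_eq_of_rel (huv : F u v) (hvu : v ≠ u) : partner F u = v := by
  obtain ⟨hF, hne⟩ := partner_spec ⟨v, huv, hvu⟩
  rcases hidx u _ v hF huv with h | h | h
  exacts [(hne h.symm).elim, (hvu h.symm).elim, h]

theorem partner_eq_iff :
    partner F u = v ↔ (F u v ∧ v ≠ u) ∨ (v = u ∧ ¬∃ w, F u w ∧ w ≠ u) := by
  constructor
  · rintro rfl
    by_cases h : ∃ w, F u w ∧ w ≠ u
    exacts [Or.inl (partner_spec h), Or.inr ⟨partner_of_not_exists h, h⟩]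
  · rintro (⟨huv, hvu⟩ | ⟨rfl, h⟩)
    exacts [partner_eq_of_rel hidx huv hvu, partner_of_not_exists h]

theorem partner_partner (hsymm : ∀ ⦃x y⦄, F x y → F y x) : partner F (partner F u) = u := by
  by_cases h : ∃ w, F u w ∧ w ≠ u
  · obtain ⟨hF, hne⟩ := partner_spec h
    exact partner_eq_of_rel hidx (hsymm hF) hne.symm
  · rw [partner_of_not_exists h, partner_of_not_exists h]

theorem rel_iff_eq_or_eq_partner (hrefl : ∀ x, F x x) : F u v ↔ v = u ∨ v = partner F u := by
  constructor
  · intro huv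
    by_cases hvu : v = u
    exacts [Or.inl hvu, Or.inr (partner_eq_of_rel hidx huv hvu).symm]
  · rintro (rfl | rfl)
    · exact hrefl v
    · by_cases h : ∃ w, F u w ∧ w ≠ u
      · exact (partner_spec h).1
      · rw [partner_of_not_exists h]
        exact hrefl u

end Partner

theorem qBorelFun_partner {X : Type} [MeasurableSpace X] [StandardBorelSpace X] {E : Setoid X}
    (hE : CBER E) {F : Quotient E → Quotient E → Prop} (hFB : QBorelRel E E {p | F p.1 p.2})
    (hidx : ∀ x y z, F x y → F x z → x = y ∨ x = z ∨ y = z) : QBorelFun E E (partner F) := by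
  have hne (x y : X) : Quotient.mk E y ≠ Quotient.mk E x ↔ ¬E.r x y := by
    rw [ne_eq, Quotient.eq]
    exact not_congr ⟨E.symm, E.symm⟩
  let C : Set (X × X) := {p | F (Quotient.mk E p.1) (Quotient.mk E p.2)} ∩ {p | E.r p.1 p.2}ᶜ
  have hC : MeasurableSet C := hFB.inter hE.1.compl
  have hsec (x : X) : {y | (x, y) ∈ C}.Countable := by
    refine (hE.2 (partner F (Quotient.mk E x)).out).mono fun y ⟨hF, hxy⟩ => ?_
    exact Quotient.eq.1 ((Quotient.out_eq _).trans (partner_eq_of_rel hidx hF ((hne x y).2 hxy)))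
  have hmoved (x : X) : x ∈ Prod.fst '' C ↔ ∃ w, F (Quotient.mk E x) w ∧ w ≠ Quotient.mk E x := by
    simp only [Quotient.exists, hne]
    constructor
    · rintro ⟨⟨x', y⟩, hp, rfl⟩
      exact ⟨y, hp⟩
    · rintro ⟨y, hp⟩
      exact ⟨(x, y), hp, rfl⟩
  have hgraph : {p : X × X | partner F (Quotient.mk E p.1) = Quotient.mk E p.2} =
      C ∪ ({p | E.r p.1 p.2} ∩ Prod.fst ⁻¹' (Prod.fst '' C)ᶜ) := by
    ext ⟨x, y⟩
    simp only [mem_ofPred_eq, partner_eq_iff hidx, hne, mem_union, mem_inter_iff, mem_compl_iff,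
      mem_preimage, hmoved, Quotient.eq]
    exact or_congr Iff.rfl (and_congr ⟨E.symm, E.symm⟩ Iff.rfl)
  unfold QBorelFun
  rw [hgraph]
  exact hC.union (hE.1.inter
    ((measurableSet_image_fst_of_countable_sections hC hsec).compl.preimage measurable_fst))

/-- every Borel equivalence relation of index ≤ 2 on a quotient Borel space is
generated by a single Borel involution, i.e. it is the orbit equivalence relation of a Borel
action of `ℤ/2ℤ`. -/
theorem stmt_14 {X : Type} [MeasurableSpace X] [StandardBorelSpace X]
    (E : Setoid X) (hE : CBER E)
    (F : Quotient E → Quotient E → Prop) (hFeq : Equivalence F)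
    (hFB : QBorelRel E E {p | F p.1 p.2})
    (hidx : ∀ x y z : Quotient E, F x y → F x z → x = y ∨ x = z ∨ y = z) :
    ∃ f : Quotient E → Quotient E,
      QBorelFun E E f ∧ (∀ x, f (f x) = x) ∧
      ∀ x y : Quotient E, F x y ↔ (y = x ∨ y = f x) :=
  ⟨partner F, qBorelFun_partner hE hFB hidx, fun _ => partner_partner hidx fun _ _ => hFeq.symm,
    fun _ _ => rel_iff_eq_or_eq_partner hidx hFeq.refl⟩
end

section
/- (Feldman–Moore for quotient spaces) Let F be a Borel enumerable equivalence relation on a quotient Borel space (X,E), i.e., F is the union of countably many graphs of Borel endomorphisms of (X,E). Then there is a countable group Γ acting by Borel automorphisms on (X,E) whose orbit equivalence relation is exactly F. -/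
/-!
For each pair `(n, m)`, the map `f n` is a partial injection on the set where `f m` undoes it, and
its graph splits into chains. On the cycles and bi-infinite chains `f n` is a bijection with
inverse `f m`; the remaining edges `x ↦ f n x` are two-coloured by the parity of the length of the
chain behind `x` (or ahead of `x`, when the chain behind is infinite), and each colour class is
swapped by an involution. These three maps per pair generate a free group acting by Borel
automorphisms in the full group of `F`, and `F x y` produces a pair with `f n x = y`, `f m y = x`.
Borelness is Suslin's theorem: for a function with Borel graph, the sets describing preimages and
compositions are projections of Borel sets whose complements are projections of Borel sets too.
-/

open MeasureTheory Set

section Chains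

variable {Z : Type*} {φ ψ : Z → Z} {x : Z} {k : ℕ}

def invDom (φ ψ : Z → Z) : Set Z := {x | ψ (φ x) = x}

lemma apply_mem_invDom_swap (hx : x ∈ invDom φ ψ) : φ x ∈ invDom ψ φ := congrArg φ hx

-- `x ∈ chainGE φ ψ k` iff `φ` can be applied `k` times from `x`, each step being undone by `ψ`.
def chainGE (φ ψ : Z → Z) : ℕ → Set Z
  | 0 => univ
  | k + 1 => invDom φ ψ ∩ φ ⁻¹' chainGE φ ψ k

lemma chainGE_succ : chainGE φ ψ (k + 1) = invDom φ ψ ∩ φ ⁻¹' chainGE φ ψ k := rfl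

lemma chainGE_antitone : Antitone (chainGE φ ψ) := by
  refine antitone_nat_of_succ_le fun k => ?_
  induction k with
  | zero => exact subset_univ _
  | succ k ih => exact inter_subset_inter_right _ (preimage_mono ih)

lemma chainGE_one_subset : chainGE φ ψ 1 ⊆ invDom φ ψ := inter_subset_left

lemma apply_mem_chainGE_swap_succ (hx : x ∈ invDom φ ψ) :
    φ x ∈ chainGE ψ φ (k + 1) ↔ x ∈ chainGE ψ φ k := by
  rw [chainGE_succ, mem_inter_iff, mem_preimage, hx]
  exact and_iff_right (apply_mem_invDom_swap hx)

def chainEq (φ ψ : Z → Z) (k : ℕ) : Set Z := chainGE φ ψ k \ chainGE φ ψ (k + 1)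

lemma chainEq_unique {k' : ℕ} (h : x ∈ chainEq φ ψ k) (h' : x ∈ chainEq φ ψ k') : k = k' := by
  by_contra hne
  rcases Nat.lt_or_gt_of_ne hne with hlt | hlt
  · exact h.2 (chainGE_antitone hlt h'.1)
  · exact h'.2 (chainGE_antitone hlt h.1)

lemma notMem_chainEq_zero (hx : x ∈ invDom φ ψ) : x ∉ chainEq φ ψ 0 :=
  fun h => h.2 ⟨hx, trivial⟩

lemma mem_chainEq_succ (hx : x ∈ invDom φ ψ) :
    x ∈ chainEq φ ψ (k + 1) ↔ φ x ∈ chainEq φ ψ k := by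
  simp only [chainEq, mem_sdiff, chainGE_succ (φ := φ), mem_inter_iff, mem_preimage, hx, true_and]

lemma apply_mem_chainEq_swap_succ (hx : x ∈ invDom φ ψ) :
    φ x ∈ chainEq ψ φ (k + 1) ↔ x ∈ chainEq ψ φ k := by
  simp only [chainEq, mem_sdiff, apply_mem_chainGE_swap_succ hx]

def chainInf (φ ψ : Z → Z) : Set Z := ⋂ k, chainGE φ ψ k

lemma notMem_chainInf_of_mem_chainEq (h : x ∈ chainEq φ ψ k) : x ∉ chainInf φ ψ :=
  fun hinf => h.2 (mem_iInter.1 hinf (k + 1))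

lemma exists_mem_chainEq (hx : x ∉ chainInf φ ψ) : ∃ k, x ∈ chainEq φ ψ k := by
  by_contra! h
  refine hx (mem_iInter.2 fun k => ?_)
  induction k with
  | zero => trivial
  | succ k ih => exact not_not.1 fun hk => h k ⟨ih, hk⟩

lemma mapsTo_chainInf : MapsTo φ (chainInf φ ψ) (chainInf φ ψ) := fun _ hx =>
  mem_iInter.2 fun k => (mem_iInter.1 hx (k + 1)).2

lemma apply_mem_chainInf_swap (hx : x ∈ invDom φ ψ) (hinf : x ∈ chainInf ψ φ) :
    φ x ∈ chainInf ψ φ := by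
  refine mem_iInter.2 fun k => ?_
  cases k with
  | zero => trivial
  | succ k => exact (apply_mem_chainGE_swap_succ hx).2 (mem_iInter.1 hinf k)

def chainCore (φ ψ : Z → Z) : Set Z := chainInf φ ψ ∩ chainInf ψ φ

lemma chainCore_comm : chainCore ψ φ = chainCore φ ψ := inter_comm _ _

lemma chainCore_subset_invDom : chainCore φ ψ ⊆ invDom φ ψ := fun _ hx =>
  chainGE_one_subset (mem_iInter.1 hx.1 1)

lemma mapsTo_chainCore : MapsTo φ (chainCore φ ψ) (chainCore φ ψ) := fun _ hx =>
  ⟨mapsTo_chainInf hx.1, apply_mem_chainInf_swap (chainCore_subset_invDom hx) hx.2⟩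

-- The edges `x ↦ φ x` outside the cycles and bi-infinite chains, coloured by the parity of the
-- length of the chain behind `x`, or ahead of `x` when the former is infinite. Consecutive edges get
-- different colours.
def parityPiece (φ ψ : Z → Z) (b : Bool) : Set Z :=
  invDom φ ψ ∩ ⋃ (k : ℕ) (_ : k.bodd = b), chainEq ψ φ k ∪ chainInf ψ φ ∩ chainEq φ ψ k

lemma apply_notMem_parityPiece {b : Bool} (hx : x ∈ parityPiece φ ψ b) :
    φ x ∉ parityPiece φ ψ b := by
  simp only [parityPiece, mem_inter_iff, mem_iUnion] at hx ⊢
  rintro ⟨-, j, hj, hφx⟩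
  obtain ⟨hxd, k, hk, hxk | ⟨hxinf, hxk⟩⟩ := hx
  · have hφxk := (apply_mem_chainEq_swap_succ hxd).2 hxk
    rcases hφx with hφxj | ⟨hφxinf, -⟩
    · obtain rfl := chainEq_unique hφxk hφxj
      simp [Nat.bodd_succ, hk] at hj
    · exact notMem_chainInf_of_mem_chainEq hφxk hφxinf
  · cases k with
    | zero => exact notMem_chainEq_zero hxd hxk
    | succ k =>
      rcases hφx with hφxj | ⟨-, hφxj⟩
      · exact notMem_chainInf_of_mem_chainEq hφxj (apply_mem_chainInf_swap hxd hxinf)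
      · obtain rfl := chainEq_unique ((mem_chainEq_succ hxd).1 hxk) hφxj
        simp [Nat.bodd_succ, hj] at hk

lemma exists_mem_parityPiece (hx : x ∈ invDom φ ψ) (hcore : x ∉ chainCore φ ψ) :
    ∃ b, x ∈ parityPiece φ ψ b := by
  by_cases hinf : x ∈ chainInf ψ φ
  · obtain ⟨k, hk⟩ := exists_mem_chainEq fun h => hcore ⟨h, hinf⟩
    exact ⟨k.bodd, hx, mem_iUnion₂.2 ⟨k, rfl, Or.inr ⟨hinf, hk⟩⟩⟩
  · obtain ⟨k, hk⟩ := exists_mem_chainEq hinf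
    exact ⟨k.bodd, hx, mem_iUnion₂.2 ⟨k, rfl, Or.inl hk⟩⟩

end Chains

section ChainPerms

open Function
open scoped Classical

variable {Z : Type*} {φ ψ : Z → Z} {x : Z}

lemma leftInverse_piecewise_id {C : Set Z} [∀ x, Decidable (x ∈ C)] (hφ : MapsTo φ C C)
    (hψφ : LeftInvOn ψ φ C) : LeftInverse (C.piecewise ψ id) (C.piecewise φ id) := by
  intro x
  by_cases hx : x ∈ C
  · rw [piecewise_eq_of_mem _ _ _ hx, piecewise_eq_of_mem _ _ _ (hφ hx), hψφ hx]
  · rw [piecewise_eq_of_notMem _ _ _ hx, id, piecewise_eq_of_notMem _ _ _ hx, id]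

noncomputable def corePerm (φ ψ : Z → Z) : Equiv.Perm Z where
  toFun := (chainCore φ ψ).piecewise φ id
  invFun := (chainCore φ ψ).piecewise ψ id
  left_inv := leftInverse_piecewise_id mapsTo_chainCore fun _ hx => chainCore_subset_invDom hx
  right_inv := by
    rw [← chainCore_comm]
    exact leftInverse_piecewise_id mapsTo_chainCore fun _ hx => chainCore_subset_invDom hx

-- When `A ⊆ invDom φ ψ`, the set `ψ ⁻¹' A ∩ invDom ψ φ` is `φ '' A`.
noncomputable def swapAlong (φ ψ : Z → Z) (A : Set Z) : Z → Z :=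
  A.piecewise φ ((ψ ⁻¹' A ∩ invDom ψ φ).piecewise ψ id)

lemma swapAlong_involutive {A : Set Z} (hA : A ⊆ invDom φ ψ) (hdisj : ∀ x ∈ A, φ x ∉ A) :
    Involutive (swapAlong φ ψ A) := by
  intro x
  by_cases hx : x ∈ A
  · have hφx : φ x ∈ ψ ⁻¹' A ∩ invDom ψ φ :=
      ⟨by rwa [mem_preimage, hA hx], apply_mem_invDom_swap (hA hx)⟩
    rw [swapAlong, piecewise_eq_of_mem _ _ _ hx, piecewise_eq_of_notMem _ _ _ (hdisj x hx),
      piecewise_eq_of_mem _ _ _ hφx, hA hx]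
  · by_cases hx' : x ∈ ψ ⁻¹' A ∩ invDom ψ φ
    · rw [swapAlong, piecewise_eq_of_notMem _ _ _ hx, piecewise_eq_of_mem _ _ _ hx',
        piecewise_eq_of_mem _ _ _ (show ψ x ∈ A from hx'.1)]
      exact hx'.2
    · rw [swapAlong, piecewise_eq_of_notMem _ _ _ hx, piecewise_eq_of_notMem _ _ _ hx', id,
        piecewise_eq_of_notMem _ _ _ hx, piecewise_eq_of_notMem _ _ _ hx', id]

lemma corePerm_eqOn : EqOn (corePerm φ ψ) φ (chainCore φ ψ) := piecewise_eqOn _ _ _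

lemma corePerm_eqOn_compl : EqOn (corePerm φ ψ) id (chainCore φ ψ)ᶜ :=
  piecewise_eqOn_compl _ _ _

lemma swapAlong_eqOn {A : Set Z} : EqOn (swapAlong φ ψ A) φ A := piecewise_eqOn _ _ _

lemma swapAlong_eqOn_compl {A : Set Z} :
    EqOn (swapAlong φ ψ A) ((ψ ⁻¹' A ∩ invDom ψ φ).piecewise ψ id) Aᶜ :=
  piecewise_eqOn_compl _ _ _

noncomputable def chainGenerator (φ ψ : Z → Z) : Option Bool → Equiv.Perm Z
  | none => corePerm φ ψ
  | some b => (swapAlong_involutive inter_subset_left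
      fun _ => apply_notMem_parityPiece (φ := φ) (ψ := ψ) (b := b)).toPerm

lemma exists_chainGenerator_apply_eq (hx : x ∈ invDom φ ψ) :
    ∃ o, chainGenerator φ ψ o x = φ x := by
  by_cases hcore : x ∈ chainCore φ ψ
  · exact ⟨none, corePerm_eqOn hcore⟩
  · obtain ⟨b, hb⟩ := exists_mem_parityPiece hx hcore
    exact ⟨some b, swapAlong_eqOn hb⟩

lemma chainGenerator_apply_eq_or (o : Option Bool) (x : Z) :
    chainGenerator φ ψ o x = φ x ∨ chainGenerator φ ψ o x = ψ x ∨ chainGenerator φ ψ o x = x := by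
  rcases o with _ | b <;>
    simp only [chainGenerator, corePerm, swapAlong, Equiv.coe_fn_mk, Involutive.coe_toPerm,
      Set.piecewise] <;>
    split_ifs <;> simp

end ChainPerms

section ChainMeasurability

variable {Z : Type*} [MeasurableSpace Z] {φ ψ : Z → Z}

lemma measurableSet_chainGE (hφ : Measurable φ) (hd : MeasurableSet (invDom φ ψ)) :
    ∀ k, MeasurableSet (chainGE φ ψ k)
  | 0 => MeasurableSet.univ
  | k + 1 => hd.inter ((measurableSet_chainGE hφ hd k).preimage hφ)

lemma measurableSet_chainEq (hφ : Measurable φ) (hd : MeasurableSet (invDom φ ψ)) (k : ℕ) :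
    MeasurableSet (chainEq φ ψ k) :=
  (measurableSet_chainGE hφ hd k).diff (measurableSet_chainGE hφ hd (k + 1))

lemma measurableSet_chainInf (hφ : Measurable φ) (hd : MeasurableSet (invDom φ ψ)) :
    MeasurableSet (chainInf φ ψ) :=
  MeasurableSet.iInter (measurableSet_chainGE hφ hd)

variable (hφ : Measurable φ) (hψ : Measurable ψ) (hφψ : MeasurableSet (invDom φ ψ))
  (hψφ : MeasurableSet (invDom ψ φ))
include hφ hψ hφψ hψφ

lemma measurableSet_chainCore : MeasurableSet (chainCore φ ψ) :=
  (measurableSet_chainInf hφ hφψ).inter (measurableSet_chainInf hψ hψφ)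

lemma measurableSet_parityPiece (b : Bool) : MeasurableSet (parityPiece φ ψ b) :=
  hφψ.inter <| MeasurableSet.iUnion fun k => MeasurableSet.iUnion fun _ =>
    (measurableSet_chainEq hψ hψφ k).union
      ((measurableSet_chainInf hψ hψφ).inter (measurableSet_chainEq hφ hφψ k))

end ChainMeasurability

namespace QBorelFun

variable {X : Type} {E : Setoid X} {g h : Quotient E → Quotient E}

lemma image_fst_graph {W : Type*} (R : W → Quotient E → Prop) :
    Prod.fst '' {q : (W × X) × X | g ⟦q.1.2⟧ = ⟦q.2⟧ ∧ R q.1.1 ⟦q.2⟧} =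
      {p : W × X | R p.1 (g ⟦p.2⟧)} := by
  ext ⟨w, x⟩
  constructor
  · rintro ⟨⟨p, y⟩, ⟨hy, hR⟩, rfl⟩
    simpa [hy] using hR
  · intro hR
    obtain ⟨y, hy⟩ := Quotient.exists_rep (g ⟦x⟧)
    exact ⟨((w, x), y), ⟨hy.symm, by rwa [hy]⟩, rfl⟩

variable [MeasurableSpace X]

lemma perm_inv {σ : Equiv.Perm (Quotient E)} (hσ : QBorelFun E E σ) :
    QBorelFun E E ⇑σ⁻¹ := by
  have : {p : X × X | σ⁻¹ ⟦p.1⟧ = ⟦p.2⟧} = Prod.swap ⁻¹' {p | σ ⟦p.1⟧ = ⟦p.2⟧} := by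
    ext p
    simp [Equiv.Perm.inv_def, Equiv.eq_symm_apply, eq_comm]
  unfold QBorelFun
  rw [this]
  exact hσ.preimage measurable_swap

lemma of_eqOn {A : Set (Quotient E)} (hA : MeasurableSet A) (hg : QBorelFun E E g)
    (hh : QBorelFun E E h) {k : Quotient E → Quotient E} (hkg : EqOn k g A) (hkh : EqOn k h Aᶜ) :
    QBorelFun E E k := by
  have hA' : MeasurableSet {p : X × X | ⟦p.1⟧ ∈ A} :=
    hA.preimage (measurable_quotient_mk''.comp measurable_fst)
  have : {p : X × X | k ⟦p.1⟧ = ⟦p.2⟧} =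
      {p : X × X | ⟦p.1⟧ ∈ A} ∩ {p | g ⟦p.1⟧ = ⟦p.2⟧} ∪
        {p : X × X | ⟦p.1⟧ ∈ A}ᶜ ∩ {p | h ⟦p.1⟧ = ⟦p.2⟧} := by
    ext p
    by_cases hp : ⟦p.1⟧ ∈ A
    · simp [hp, hkg hp]
    · simp [hp, hkh hp]
  unfold QBorelFun
  rw [this]
  exact (hA'.inter hg).union (hA'.compl.inter hh)

lemma measurableSet_fixedPoints (hg : QBorelFun E E g) :
    MeasurableSet (Function.fixedPoints g) :=
  hg.preimage (measurable_id.prodMk measurable_id)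

variable [StandardBorelSpace X]

lemma measurableSet_setOf_apply (hg : QBorelFun E E g) {W : Type*} [MeasurableSpace W]
    [StandardBorelSpace W] {P : W → Quotient E → Prop}
    (hP : MeasurableSet {p : W × X | P p.1 ⟦p.2⟧}) :
    MeasurableSet {p : W × X | P p.1 (g ⟦p.2⟧)} := by
  let _ := upgradeStandardBorel (W × X)
  have hgraph : MeasurableSet {q : (W × X) × X | g ⟦q.1.2⟧ = ⟦q.2⟧} :=
    hg.preimage (measurable_snd.comp measurable_fst |>.prodMk measurable_snd)
  have hP' : MeasurableSet {q : (W × X) × X | P q.1.1 ⟦q.2⟧} :=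
    hP.preimage (measurable_fst.comp measurable_fst |>.prodMk measurable_snd)
  have hpos : AnalyticSet {p : W × X | P p.1 (g ⟦p.2⟧)} := by
    rw [← image_fst_graph]
    exact (hgraph.inter hP').analyticSet_image measurable_fst
  have hneg : AnalyticSet {p : W × X | P p.1 (g ⟦p.2⟧)}ᶜ := by
    rw [Set.compl_ofPred, ← image_fst_graph fun w q => ¬ P w q]
    exact (hgraph.inter hP'.compl).analyticSet_image measurable_fst
  exact hpos.measurableSet_of_compl hneg

lemma measurable (hg : QBorelFun E E g) : Measurable g := fun A hA =>
  (hg.measurableSet_setOf_apply (P := fun (_ : X) q => q ∈ A)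
    (hA.preimage (measurable_quotient_mk''.comp measurable_snd))).preimage
    (measurable_id.prodMk measurable_id)

lemma comp (hg : QBorelFun E E g) (hh : QBorelFun E E h) : QBorelFun E E (g ∘ h) :=
  (hh.measurableSet_setOf_apply (P := fun z q => g q = ⟦z⟧)
    (hg.preimage measurable_swap)).preimage measurable_swap

end QBorelFun

lemma qborelFun_id {X : Type} [MeasurableSpace X] {E : Setoid X}
    (hE : MeasurableSet {p : X × X | E.r p.1 p.2}) : QBorelFun E E id := by
  have : {p : X × X | id (⟦p.1⟧ : Quotient E) = ⟦p.2⟧} = {p | E.r p.1 p.2} := by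
    ext p
    exact Quotient.eq
  unfold QBorelFun
  rw [this]
  exact hE

section QuotientBorel

variable {X : Type} [MeasurableSpace X] [StandardBorelSpace X] {E : Setoid X}

lemma qborelFun_chainGenerator (hE : MeasurableSet {p : X × X | E.r p.1 p.2})
    {φ ψ : Quotient E → Quotient E} (hφ : QBorelFun E E φ) (hψ : QBorelFun E E ψ)
    (o : Option Bool) : QBorelFun E E (chainGenerator φ ψ o) := by
  have hφψ : MeasurableSet (invDom φ ψ) := (hψ.comp hφ).measurableSet_fixedPoints
  have hψφ : MeasurableSet (invDom ψ φ) := (hφ.comp hψ).measurableSet_fixedPoints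
  rcases o with _ | b
  · exact .of_eqOn (measurableSet_chainCore hφ.measurable hψ.measurable hφψ hψφ) hφ
      (qborelFun_id hE) corePerm_eqOn corePerm_eqOn_compl
  · have hA := measurableSet_parityPiece hφ.measurable hψ.measurable hφψ hψφ b
    have hB := (hA.preimage hψ.measurable).inter hψφ
    classical
    exact .of_eqOn hA hφ (.of_eqOn hB hψ (qborelFun_id hE) (piecewise_eqOn _ _ _)
      (piecewise_eqOn_compl _ _ _)) swapAlong_eqOn swapAlong_eqOn_compl

def borelFullGroup (hE : MeasurableSet {p : X × X | E.r p.1 p.2})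
    {F : Quotient E → Quotient E → Prop} (hF : Equivalence F) :
    Subgroup (Equiv.Perm (Quotient E)) where
  carrier := {σ | QBorelFun E E σ ∧ ∀ x, F x (σ x)}
  mul_mem' := fun ⟨hσ, hσF⟩ ⟨hτ, hτF⟩ => ⟨hσ.comp hτ, fun x => hF.trans (hτF x) (hσF _)⟩
  one_mem' := ⟨qborelFun_id hE, hF.refl⟩
  inv_mem' := fun {σ} ⟨hσ, hσF⟩ =>
    ⟨hσ.perm_inv, fun x => hF.symm (by simpa using hσF (σ⁻¹ x))⟩

end QuotientBorel

/-- Feldman–Moore for quotient spaces: a Borel enumerable equivalence relation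
on a quotient Borel space is the orbit equivalence relation of a Borel action of a countable
group. -/
theorem stmt_16 {X : Type} [MeasurableSpace X] [StandardBorelSpace X]
    (E : Setoid X) (hE : CBER E)
    (F : Quotient E → Quotient E → Prop) (hFeq : Equivalence F)
    (f : ℕ → Quotient E → Quotient E) (hfB : ∀ n, QBorelFun E E (f n))
    (henum : ∀ x y : Quotient E, F x y ↔ ∃ n, f n x = y) :
    ∃ (Γ : Type) (_ : Group Γ) (_ : Countable Γ)
      (a : Γ → Quotient E → Quotient E),
      (∀ x, a 1 x = x) ∧ (∀ γ δ x, a (γ * δ) x = a γ (a δ x)) ∧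
      (∀ γ, QBorelFun E E (a γ)) ∧
      ∀ x y : Quotient E, F x y ↔ ∃ γ, a γ x = y := by
  have hF : ∀ n x, F x (f n x) := fun n x => (henum x _).2 ⟨n, rfl⟩
  have hgen (t : ℕ × ℕ × Option Bool) :
      chainGenerator (f t.1) (f t.2.1) t.2.2 ∈ borelFullGroup hE.1 hFeq := by
    refine ⟨qborelFun_chainGenerator hE.1 (hfB _) (hfB _) _, fun x => ?_⟩
    rcases chainGenerator_apply_eq_or t.2.2 x with h | h | h <;> rw [h]
    exacts [hF _ x, hF _ x, hFeq.refl x]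
  let Φ : FreeGroup (ℕ × ℕ × Option Bool) →* borelFullGroup hE.1 hFeq :=
    FreeGroup.lift fun t => ⟨_, hgen t⟩
  refine ⟨FreeGroup (ℕ × ℕ × Option Bool), inferInstance, inferInstance,
    fun γ => ((Φ γ : borelFullGroup hE.1 hFeq) : Equiv.Perm (Quotient E)),
    fun x => by simp, fun γ δ x => by simp, fun γ => (Φ γ).2.1, fun x y => ⟨fun hxy => ?_, ?_⟩⟩
  · obtain ⟨n, rfl⟩ := (henum x y).1 hxy
    obtain ⟨m, hm⟩ := (henum _ x).1 (hFeq.symm hxy)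
    obtain ⟨o, ho⟩ := exists_chainGenerator_apply_eq (show x ∈ invDom (f n) (f m) from hm)
    exact ⟨FreeGroup.of (n, m, o), by simpa [Φ] using ho⟩
  · rintro ⟨γ, rfl⟩
    exact (Φ γ).2.2 x
end

section
/- Let (X,E) be a nonsmooth quotient Borel space carrying a {0,1}-valued nonatomic Borel measure μ on Bor(X/E), and let a nontrivial countable group Γ act freely on (X,E) by Borel μ-preserving automorphisms. Then the orbit equivalence relation E_Γ of the action admits no Borel selector over E; in particular E_Γ is nonsmooth. -/
open MeasureTheory Set

/-- if a nontrivial countable group acts freely by Borel automorphisms on a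
nonsmooth quotient Borel space preserving a two-valued nonatomic Borel measure, then the
orbit equivalence relation admits no Borel selector over `E` (and no Borel transversal);
in particular it is nonsmooth. -/
theorem stmt_19 {X : Type} [MeasurableSpace X] [StandardBorelSpace X]
    (E : Setoid X) (hE : CBER E) (hEns : ¬ SmoothRel E)
    (μ : Measure (Quotient E)) [IsProbabilityMeasure μ]
    (htwo : ∀ s : Set (Quotient E), MeasurableSet s → μ s = 0 ∨ μ s = 1)
    (hnonatomic : ∀ q : Quotient E, μ {q} = 0)
    (Γ : Type) [Group Γ] [Countable Γ] (hΓ : Nontrivial Γ)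
    (a : Γ → Quotient E → Quotient E)
    (hone : ∀ x, a 1 x = x) (hmul : ∀ γ δ x, a (γ * δ) x = a γ (a δ x))
    (haB : ∀ γ, QBorelFun E E (a γ))
    (hfree : ∀ γ x, a γ x = x → γ = 1)
    (hpres : ∀ γ (s : Set (Quotient E)), MeasurableSet s → μ (a γ ⁻¹' s) = μ s) :
    (¬ ∃ φ : Quotient E → Quotient E,
        QBorelFun E E φ ∧ (∀ x, ∃ γ, a γ x = φ x) ∧
        ∀ x y : Quotient E, (∃ γ, a γ x = y) → φ x = φ y) ∧
    (¬ ∃ T : Set (Quotient E),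
        QBorelSet E T ∧ ∀ x : Quotient E, ∃! t, t ∈ T ∧ ∃ γ, a γ x = t) := by
  classical
  have key : ¬ ∃ φ : Quotient E → Quotient E,
      QBorelFun E E φ ∧ (∀ x, ∃ γ, a γ x = φ x) ∧
      ∀ x y : Quotient E, (∃ γ, a γ x = y) → φ x = φ y := by
    rintro ⟨φ, hφB, hsel, hinv⟩
    set T : Set (Quotient E) := {q | φ q = q} with hTdef
    have hTmeas : MeasurableSet T := by
      rw [measurableSet_quotient]
      have : (Quotient.mk'' ⁻¹' T : Set X) =
          (fun x : X => (x, x)) ⁻¹'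
            {p : X × X | φ (Quotient.mk E p.1) = Quotient.mk E p.2} := rfl
      rw [this]
      exact hφB.preimage (measurable_id.prodMk measurable_id)
    have hZ : ∀ γ : Γ, (a γ) ⁻¹' T = {q | φ q = a γ q} := by
      intro γ
      ext q
      simp only [mem_preimage, hTdef, mem_setOf_eq]
      have h1 : φ q = φ (a γ q) := hinv q (a γ q) ⟨γ, rfl⟩
      constructor
      · intro h; rw [h1, h]
      · intro h; rw [← h1, h]
    have hcover : (univ : Set (Quotient E)) ⊆ ⋃ γ : Γ, (a γ) ⁻¹' T := by
      intro q _
      obtain ⟨γ, hγ⟩ := hsel q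
      exact mem_iUnion.2 ⟨γ, by rw [hZ]; exact hγ.symm⟩
    have hpresT : ∀ γ : Γ, μ ((a γ) ⁻¹' T) = μ T := fun γ => hpres γ T hTmeas
    have hT1 : μ T = 1 := by
      rcases htwo T hTmeas with h0 | h1
      · exfalso
        have hle : (1 : ENNReal) ≤ ∑' γ : Γ, μ ((a γ) ⁻¹' T) := by
          calc (1 : ENNReal) = μ univ := (measure_univ).symm
            _ ≤ μ (⋃ γ : Γ, (a γ) ⁻¹' T) := measure_mono hcover
            _ ≤ ∑' γ : Γ, μ ((a γ) ⁻¹' T) := measure_iUnion_le _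
        simp [hpresT, h0] at hle
      · exact h1
    obtain ⟨γ₀, hγ₀⟩ := exists_ne (1 : Γ)
    have hsub : (a γ₀) ⁻¹' T ⊆ Tᶜ := by
      intro q hq hqT
      rw [hZ] at hq
      have hfix : a γ₀ q = q := by rw [← hq]; exact hqT
      exact hγ₀ (hfree γ₀ q hfix)
    have hcontr : (1 : ENNReal) ≤ 0 := by
      calc (1 : ENNReal) = μ ((a γ₀) ⁻¹' T) := by rw [hpresT, hT1]
        _ ≤ μ Tᶜ := measure_mono hsub
        _ = 0 := by
            rw [measure_compl hTmeas (measure_ne_top μ T), measure_univ, hT1, tsub_self]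
    simp at hcontr
  refine ⟨key, ?_⟩
  rintro ⟨T, hTB, hTuniq⟩
  set φ : Quotient E → Quotient E := fun q => (hTuniq q).exists.choose with hφdef
  have hφspec : ∀ q, φ q ∈ T ∧ ∃ γ, a γ q = φ q := fun q => (hTuniq q).exists.choose_spec
  have hφchar : ∀ q t, t ∈ T → (∃ γ, a γ q = t) → φ q = t := by
    intro q t ht hγ
    exact ((hTuniq q).unique ⟨(hφspec q).1, (hφspec q).2⟩ ⟨ht, hγ⟩)
  refine key ⟨φ, ?_, fun q => (hφspec q).2, ?_⟩
  · unfold QBorelFun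
    have hset : {p : X × X | φ (Quotient.mk E p.1) = Quotient.mk E p.2} =
        {p : X × X | Quotient.mk E p.2 ∈ T} ∩
          ⋃ γ : Γ, {p : X × X | a γ (Quotient.mk E p.1) = Quotient.mk E p.2} := by
      ext p
      simp only [mem_setOf_eq, mem_inter_iff, mem_iUnion]
      constructor
      · intro h
        refine ⟨h ▸ (hφspec (Quotient.mk E p.1)).1, ?_⟩
        obtain ⟨γ, hγ⟩ := (hφspec (Quotient.mk E p.1)).2
        exact ⟨γ, by rw [hγ, h]⟩
      · rintro ⟨hmem, γ, hγ⟩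
        exact hφchar _ _ hmem ⟨γ, hγ⟩
    rw [hset]
    refine MeasurableSet.inter ?_ (MeasurableSet.iUnion fun γ => haB γ)
    have : {p : X × X | Quotient.mk E p.2 ∈ T} =
        Prod.snd ⁻¹' (Quotient.mk E ⁻¹' T) := rfl
    rw [this]
    exact hTB.preimage measurable_snd
  · rintro x y ⟨γ, hγ⟩
    obtain ⟨hmem, δ, hδ⟩ := hφspec x
    refine (hφchar y (φ x) hmem ⟨δ * γ⁻¹, ?_⟩).symm
    rw [← hγ, ← hmul, mul_assoc, inv_mul_cancel, mul_one]
    exact hδ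
end
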